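/- arXiv:2405.04694 — 11 statements merged into one kernel-verified Lean document; each statement's English description precedes it below -/
import Mathlib

section
/- Let K be a field with |K| ≥ r+2 and characteristic ≠ 2, let s ≤ r ≤ min{m,n}, and define S to be the set of m×n matrices C over K with C_{i,j}=0 for i,j ∈ {1,…,s} with i>j, C_{i,i}=1 for i=1,…,s, and C_{i,j}=0 for i>r. Then S is an affine subspace of dimension r·n − s(s+1)/2, every matrix in S has rank between s and r, and both the minimum rank s and maximum rank r are attained on S. -/
/-!
The set is the translate, by the matrix `leadingIdentity s` with ones at the positions `(i, i)`,
`i < s`, of the space of matrices vanishing on the pinned positions: the weakly lower triangle of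
the leading `s × s` block and all rows from `r` on. Its dimension is therefore the number of free
positions, `r * n - s * (s + 1) / 2`. The rows from `r` on vanish, so the rank is at most `r`;
the leading `s × s` block is unitriangular, so the rank is at least `s`. Both bounds are attained
by `leadingIdentity s` and `leadingIdentity r`, which lie in the set.
-/

open Finset

namespace Matrix

theorem card_le_rank_of_isUpperTriangular_submatrix {R m n ι : Type*} [CommRing R] [IsDomain R]
    [Fintype n] [Fintype ι] [LinearOrder ι] (A : Matrix m n R) (f : ι → m) (g : ι → n)
    (hA : (A.submatrix f g).IsUpperTriangular) (hdiag : ∀ i, A (f i) (g i) ≠ 0) :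
    Fintype.card ι ≤ A.rank := by
  classical
  have hdet : (A.submatrix f g).det ≠ 0 := by
    simpa [det_of_isUpperTriangular hA, prod_ne_zero_iff] using hdiag
  exact (rank_of_det_ne_zero hdet).symm.le.trans (rank_submatrix_le A f g)

theorem rank_le_of_apply_eq_zero_of_le {R : Type*} [CommSemiring R] [StrongRankCondition R]
    {m n t : ℕ} (A : Matrix (Fin m) (Fin n) R)
    (hA : ∀ (i : Fin m) j, t ≤ (i : ℕ) → A i j = 0) : A.rank ≤ t := by
  classical
  calc A.rank ≤ #{i : Fin m | (i : ℕ) < t} := by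
        refine rank_le_card_of_support_subset A _ fun i hi => ?_
        by_contra hit
        exact hi (funext fun j => hA i j (by simpa using hit))
    _ ≤ t := by rw [Fin.card_filter_val_lt]; exact min_le_right m t

section vanishingSubmodule

variable (R : Type*) [Semiring R] {m n : Type*}

def vanishingSubmodule (P : Set (m × n)) : Submodule R (Matrix m n R) where
  carrier := {X | ∀ p ∈ P, X p.1 p.2 = 0}
  add_mem' hX hY p hp := by simp [hX p hp, hY p hp]
  zero_mem' _ _ := rfl
  smul_mem' c X hX p hp := by simp [hX p hp]

variable {R}

theorem mem_vanishingSubmodule {P : Set (m × n)} {X : Matrix m n R} :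
    X ∈ vanishingSubmodule R P ↔ ∀ p ∈ P, X p.1 p.2 = 0 := Iff.rfl

theorem finrank_vanishingSubmodule [StrongRankCondition R] [Fintype m] [Fintype n]
    (P : Set (m × n)) : Module.finrank R (vanishingSubmodule R P) = Nat.card ↥Pᶜ := by
  classical
  let e : vanishingSubmodule R P ≃ₗ[R] (↥Pᶜ → R) :=
    { toFun X p := (X : Matrix m n R) p.1.1 p.1.2
      map_add' _ _ := rfl
      map_smul' _ _ := rfl
      invFun f := ⟨of fun i j => if h : (i, j) ∈ P then 0 else f ⟨(i, j), h⟩,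
        fun p hp => by simp [hp]⟩
      left_inv X := by
        ext i j
        by_cases h : (i, j) ∈ P
        · simp [h, X.2 _ h]
        · simp [h]
      right_inv f := funext fun p => by simp [show (p : m × n) ∉ P from p.2] }
  rw [e.finrank_eq, Module.finrank_fintype_fun_eq_card, Nat.card_eq_fintype_card]

end vanishingSubmodule

variable {K : Type*} [Field K] {m n : ℕ}

theorem card_filter_lt_and_le (s : ℕ) (hsm : s ≤ m) (hsn : s ≤ n) :
    #{p : Fin m × Fin n | (p.1 : ℕ) < s ∧ (p.2 : ℕ) ≤ p.1} = s * (s + 1) / 2 := by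
  have hrow (i : Fin m) : #{j : Fin n | (i : ℕ) < s ∧ (j : ℕ) ≤ i} =
      if (i : ℕ) < s then (i : ℕ) + 1 else 0 := by
    split_ifs with hi
    · simp only [hi, true_and, Nat.le_iff_lt_add_one, Fin.card_filter_val_lt]; omega
    · simp [hi]
  calc #{p : Fin m × Fin n | (p.1 : ℕ) < s ∧ (p.2 : ℕ) ≤ p.1}
      = ∑ i : Fin m, #{j : Fin n | (i : ℕ) < s ∧ (j : ℕ) ≤ i} := by
        simp only [card_filter, Fintype.sum_prod_type]
    _ = ∑ i ∈ range m, if i < s then i + 1 else 0 := by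
        simp only [hrow]
        exact Fin.sum_univ_eq_sum_range (fun i => if i < s then i + 1 else 0) m
    _ = ∑ i ∈ range (s + 1), i := by
        rw [← sum_filter, sum_range_succ', add_zero]
        exact sum_congr (by ext; simp; omega) fun _ _ => rfl
    _ = s * (s + 1) / 2 := by rw [sum_range_id, mul_comm]; rfl

theorem card_filter_fst_lt (r : ℕ) (hrm : r ≤ m) :
    #{p : Fin m × Fin n | (p.1 : ℕ) < r} = r * n := by
  rw [← univ_product_univ, filter_product_left (fun i : Fin m => (i : ℕ) < r), card_product,
    Fin.card_filter_val_lt, min_eq_right hrm, card_univ, Fintype.card_fin]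

def pinnedEntries (s r : ℕ) : Set (Fin m × Fin n) :=
  {p | ((p.1 : ℕ) < s ∧ (p.2 : ℕ) ≤ p.1) ∨ r ≤ (p.1 : ℕ)}

theorem card_pinnedEntries_compl {s r : ℕ} (hsr : s ≤ r) (hrm : r ≤ m) (hsn : s ≤ n) :
    Nat.card ↥(pinnedEntries s r : Set (Fin m × Fin n))ᶜ = r * n - s * (s + 1) / 2 := by
  classical
  have hsplit := card_filter_add_card_filter_not
    (s := ({p | (p.1 : ℕ) < r} : Finset (Fin m × Fin n)))
    (fun p => (p.1 : ℕ) < s ∧ (p.2 : ℕ) ≤ p.1)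
  have htri :
      ({p | (p.1 : ℕ) < r ∧ (p.1 : ℕ) < s ∧ (p.2 : ℕ) ≤ p.1} : Finset (Fin m × Fin n)) =
        ({p | (p.1 : ℕ) < s ∧ (p.2 : ℕ) ≤ p.1} : Finset (Fin m × Fin n)) :=
    filter_congr fun p _ => by omega
  have hfree : ({p | p ∈ (pinnedEntries s r)ᶜ} : Finset (Fin m × Fin n)) =
      ({p | (p.1 : ℕ) < r ∧ ¬((p.1 : ℕ) < s ∧ (p.2 : ℕ) ≤ p.1)} : Finset (Fin m × Fin n)) :=
    filter_congr fun p _ => by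
      simp only [pinnedEntries, Set.mem_compl_iff, Set.mem_ofPred_eq]; omega
  rw [filter_filter, filter_filter, htri, card_filter_lt_and_le s (hsr.trans hrm) hsn,
    card_filter_fst_lt r hrm] at hsplit
  rw [Nat.card_eq_fintype_card, Fintype.card_subtype, hfree]
  omega

variable (K) in
def leadingIdentity (t : ℕ) : Matrix (Fin m) (Fin n) K :=
  of fun i j => if (i : ℕ) = j ∧ (i : ℕ) < t then 1 else 0

variable (K m n) in
def unitriangularAffineSubspace (s r : ℕ) : AffineSubspace K (Matrix (Fin m) (Fin n) K) :=
  AffineSubspace.mk' (leadingIdentity K s) (vanishingSubmodule K (pinnedEntries s r))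

theorem mem_unitriangularAffineSubspace {s r : ℕ} (hsr : s ≤ r) {A : Matrix (Fin m) (Fin n) K} :
    A ∈ unitriangularAffineSubspace K m n s r ↔
      (∀ (i : Fin m) (j : Fin n), (i : ℕ) < s → (j : ℕ) < s → (j : ℕ) < i → A i j = 0) ∧
        (∀ (i : Fin m) (j : Fin n), (i : ℕ) < s → (i : ℕ) = j → A i j = 1) ∧
        (∀ (i : Fin m) (j : Fin n), r ≤ (i : ℕ) → A i j = 0) := by
  simp only [unitriangularAffineSubspace, AffineSubspace.mem_mk', mem_vanishingSubmodule,
    pinnedEntries, vsub_eq_sub, sub_apply, sub_eq_zero, leadingIdentity, of_apply, Prod.forall,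
    Set.mem_ofPred_eq]
  constructor
  · intro hA
    refine ⟨fun i j hi hj hji => ?_, fun i j hi hij => ?_, fun i j hi => ?_⟩
    · rw [hA i j (.inl ⟨hi, hji.le⟩), if_neg (by omega)]
    · rw [hA i j (.inl ⟨hi, hij.ge⟩), if_pos ⟨hij, hi⟩]
    · rw [hA i j (.inr hi), if_neg (by omega)]
  · rintro ⟨hlower, hdiag, hrows⟩ i j (⟨hi, hji⟩ | hi)
    · obtain hij | hji := hji.eq_or_lt
      · rw [hdiag i j hi hij.symm, if_pos ⟨hij.symm, hi⟩]
      · rw [hlower i j hi (by omega) hji, if_neg (by omega)]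
    · rw [hrows i j hi, if_neg (by omega)]

theorem finrank_direction_unitriangularAffineSubspace {s r : ℕ} (hsr : s ≤ r) (hrm : r ≤ m)
    (hsn : s ≤ n) :
    Module.finrank K (unitriangularAffineSubspace K m n s r).direction =
      r * n - s * (s + 1) / 2 := by
  rw [unitriangularAffineSubspace, AffineSubspace.direction_mk', finrank_vanishingSubmodule,
    card_pinnedEntries_compl hsr hrm hsn]

theorem le_rank_of_mem_unitriangularAffineSubspace {s r : ℕ} (hsr : s ≤ r) (hsm : s ≤ m)
    (hsn : s ≤ n) {A : Matrix (Fin m) (Fin n) K}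
    (hA : A ∈ unitriangularAffineSubspace K m n s r) : s ≤ A.rank := by
  obtain ⟨hlower, hdiag, -⟩ := (mem_unitriangularAffineSubspace hsr).1 hA
  simpa using card_le_rank_of_isUpperTriangular_submatrix A (Fin.castLE hsm) (Fin.castLE hsn)
    (fun i j hji => hlower _ _ (by simp) (by simp) (by simpa using hji))
    fun i => by rw [hdiag _ _ (by simp) (by simp)]; exact one_ne_zero

theorem rank_le_of_mem_unitriangularAffineSubspace {s r : ℕ} (hsr : s ≤ r)
    {A : Matrix (Fin m) (Fin n) K} (hA : A ∈ unitriangularAffineSubspace K m n s r) :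
    A.rank ≤ r :=
  rank_le_of_apply_eq_zero_of_le A ((mem_unitriangularAffineSubspace hsr).1 hA).2.2

theorem leadingIdentity_mem_unitriangularAffineSubspace {s t r : ℕ} (hst : s ≤ t)
    (htr : t ≤ r) :
    leadingIdentity K t ∈ unitriangularAffineSubspace K m n s r := by
  refine (mem_unitriangularAffineSubspace (hst.trans htr)).2
    ⟨fun i j _ _ hji => ?_, fun i j hi hij => ?_, fun i j hi => ?_⟩
  · rw [leadingIdentity, of_apply, if_neg (by omega)]
  · rw [leadingIdentity, of_apply, if_pos ⟨hij, by omega⟩]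
  · rw [leadingIdentity, of_apply, if_neg (by omega)]

theorem rank_leadingIdentity {t : ℕ} (htm : t ≤ m) (htn : t ≤ n) :
    (leadingIdentity K t : Matrix (Fin m) (Fin n) K).rank = t :=
  have hmem := leadingIdentity_mem_unitriangularAffineSubspace (K := K) (m := m) (n := n)
    le_rfl (le_refl t)
  le_antisymm (rank_le_of_mem_unitriangularAffineSubspace le_rfl hmem)
    (le_rank_of_mem_unitriangularAffineSubspace le_rfl htm htn hmem)

end Matrix

theorem stmt1_general (K : Type*) [Field K] (m n r s : ℕ)
    (hsr : s ≤ r) (hrm : r ≤ m) (hmn : m ≤ n) :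
    ∃ S : AffineSubspace K (Matrix (Fin m) (Fin n) K),
      (S : Set (Matrix (Fin m) (Fin n) K)) =
        {C | (∀ (i : Fin m) (j : Fin n), (i : ℕ) < s → (j : ℕ) < s → (j : ℕ) < (i : ℕ) → C i j = 0) ∧
             (∀ (i : Fin m) (j : Fin n), (i : ℕ) < s → (i : ℕ) = (j : ℕ) → C i j = 1) ∧
             (∀ (i : Fin m) (j : Fin n), r ≤ (i : ℕ) → C i j = 0)} ∧
      Module.finrank K S.direction = r * n - s * (s + 1) / 2 ∧
      (∀ A ∈ S, s ≤ A.rank ∧ A.rank ≤ r) ∧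
      IsLeast {k : ℕ | ∃ A ∈ S, A.rank = k} s ∧
      IsGreatest {k : ℕ | ∃ A ∈ S, A.rank = k} r := by
  have hsm : s ≤ m := hsr.trans hrm
  have hsn : s ≤ n := hsm.trans hmn
  have hrank (A) (hA : A ∈ Matrix.unitriangularAffineSubspace K m n s r) :
      s ≤ A.rank ∧ A.rank ≤ r :=
    ⟨Matrix.le_rank_of_mem_unitriangularAffineSubspace hsr hsm hsn hA,
      Matrix.rank_le_of_mem_unitriangularAffineSubspace hsr hA⟩
  refine ⟨Matrix.unitriangularAffineSubspace K m n s r,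
    Set.ext fun A => Matrix.mem_unitriangularAffineSubspace hsr,
    Matrix.finrank_direction_unitriangularAffineSubspace hsr hrm hsn, hrank,
    ⟨⟨Matrix.leadingIdentity K s,
      Matrix.leadingIdentity_mem_unitriangularAffineSubspace le_rfl hsr,
      Matrix.rank_leadingIdentity hsm hsn⟩, ?_⟩,
    ⟨⟨Matrix.leadingIdentity K r,
      Matrix.leadingIdentity_mem_unitriangularAffineSubspace hsr le_rfl,
      Matrix.rank_leadingIdentity hrm (hrm.trans hmn)⟩, ?_⟩⟩
  · rintro k ⟨A, hA, rfl⟩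
    exact (hrank A hA).1
  · rintro k ⟨A, hA, rfl⟩
    exact (hrank A hA).2

theorem stmt1 (K : Type*) [Field K] (m n r s : ℕ)
    (hK : (r + 2 : Cardinal) ≤ Cardinal.mk K) (hchar : ringChar K ≠ 2)
    (hsr : s ≤ r) (hrm : r ≤ m) (hmn : m ≤ n) :
    ∃ S : AffineSubspace K (Matrix (Fin m) (Fin n) K),
      (S : Set (Matrix (Fin m) (Fin n) K)) =
        {C | (∀ (i : Fin m) (j : Fin n), (i : ℕ) < s → (j : ℕ) < s → (j : ℕ) < (i : ℕ) → C i j = 0) ∧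
             (∀ (i : Fin m) (j : Fin n), (i : ℕ) < s → (i : ℕ) = (j : ℕ) → C i j = 1) ∧
             (∀ (i : Fin m) (j : Fin n), r ≤ (i : ℕ) → C i j = 0)} ∧
      Module.finrank K S.direction = r * n - s * (s + 1) / 2 ∧
      (∀ A ∈ S, s ≤ A.rank ∧ A.rank ≤ r) ∧
      IsLeast {k : ℕ | ∃ A ∈ S, A.rank = k} s ∧
      IsGreatest {k : ℕ | ∃ A ∈ S, A.rank = k} r :=
  stmt1_general K m n r s hsr hrm hmn
end

section
/- Let K be a field with |K| ≥ r+2, let r ≤ m ≤ n, let G be the m×n matrix with identity block I_r in the top-left corner and zeros elsewhere, and let V be a linear subspace of K^{m×n} such that every matrix in G + V has rank at most r. Then every v ∈ V satisfies v_{i,j} = 0 for all i > r and j > r. -/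
/-!
On the (r+1)×(r+1) minor with rows 0, …, r-1, i and columns 0, …, r-1, j, the matrix G becomes
the identity with its last column zeroed, D say, and with B the same minor of v every D + t • B is
singular. Its determinant is a polynomial in t of degree ≤ r + 1 with at least r + 2 roots, hence zero.
As the last column of D vanishes, that determinant is t · q(t), where q(t) is the determinant of
D + t • B with its last column replaced by that of B; so q = 0, while q(0) = B_{r,r} = v_{i,j}.
-/

open Polynomial Matrix Cardinal

namespace Matrix

variable {ι R : Type*} [Fintype ι] [DecidableEq ι] [CommRing R]

theorem det_updateCol_one (k : ι) (w : ι → R) : ((1 : Matrix ι ι R).updateCol k w).det = w k := by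
  rw [← cramer_apply, cramer_one]
  rfl

theorem eval_det_X_smul_add_C (A B : Matrix ι ι R) (t : R) :
    (det ((X : R[X]) • A.map C + B.map C)).eval t = det (t • A + B) := by
  rw [← coe_evalRingHom, RingHom.map_det]
  congr 1
  ext a b
  simpa using mul_comm _ _

theorem det_eq_zero_of_rank_lt_card [IsDomain R] {A : Matrix ι ι R}
    (h : A.rank < Fintype.card ι) : A.det = 0 := by
  contrapose! h
  exact (rank_of_det_ne_zero h).ge

theorem apply_self_eq_zero_of_forall_det_smul_add_updateCol_one_eq_zero [IsDomain R]
    (hR : (Fintype.card ι : Cardinal) < #R) (k : ι) (B : Matrix ι ι R)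
    (hdet : ∀ t : R, det (t • B + (1 : Matrix ι ι R).updateCol k 0) = 0) :
    B k k = 0 := by
  set D := (1 : Matrix ι ι R).updateCol k 0
  set M : Matrix ι ι R[X] := (X : R[X]) • B.map C + D.map C
  have hMk : M = M.updateCol k ((X : R[X]) • fun a => C (B a k)) := by
    ext a b
    rcases eq_or_ne b k with rfl | hb
    · simp [M, D]
    · simp [hb]
  set q := (M.updateCol k fun a => C (B a k)).det
  have hfactor : M.det = X * q :=
    (congrArg det hMk).trans (det_updateCol_smul ..)
  have hMdet : M.det = 0 := by
    refine eq_zero_of_forall_eval_zero_of_natDegree_lt_card _ (fun t => ?_) ?_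
    · rw [eval_det_X_smul_add_C, hdet]
    · exact (Nat.cast_le.mpr (natDegree_det_X_add_C_le B D)).trans_lt hR
  have hq : q = 0 := (mul_eq_zero.mp (hfactor ▸ hMdet)).resolve_left X_ne_zero
  calc B k k = q.eval 0 := by
        rw [← coe_evalRingHom, RingHom.map_det, ← det_updateCol_one k (fun a => B a k)]
        congr 1
        ext a b
        rcases eq_or_ne b k with rfl | hb
        · simp
        · simp [hb, M, D]
    _ = 0 := by rw [hq, eval_zero]

theorem submatrix_lastCases_castLE_eq_updateCol_one {m n r : ℕ} (G : Matrix (Fin m) (Fin n) R)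
    (hG : ∀ i j, G i j = if (i : ℕ) = (j : ℕ) ∧ (i : ℕ) < r then 1 else 0)
    {i : Fin m} {j : Fin n} (hi : r ≤ (i : ℕ)) (hj : r ≤ (j : ℕ)) (hrm : r ≤ m) (hrn : r ≤ n) :
    G.submatrix (Fin.lastCases i (Fin.castLE hrm)) (Fin.lastCases j (Fin.castLE hrn)) =
      (1 : Matrix (Fin (r + 1)) (Fin (r + 1)) R).updateCol (Fin.last r) 0 := by
  ext a b
  cases a using Fin.lastCases <;> cases b using Fin.lastCases <;>
    simp only [submatrix_apply, Fin.lastCases_last, Fin.lastCases_castSucc, hG, updateCol_apply,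
      one_apply, Fin.ext_iff, Fin.val_castLE, Fin.val_castSucc, Fin.val_last, Pi.zero_apply] <;>
    grind

end Matrix

theorem stmt2_general (K : Type*) [Field K] (m n r : ℕ)
    (hK : (r + 2 : Cardinal) ≤ Cardinal.mk K)
    (G : Matrix (Fin m) (Fin n) K)
    (hG : ∀ i j, G i j = if (i : ℕ) = (j : ℕ) ∧ (i : ℕ) < r then 1 else 0)
    (V : Submodule K (Matrix (Fin m) (Fin n) K))
    (hrank : ∀ v ∈ V, (G + v).rank ≤ r) :
    ∀ v ∈ V, ∀ (i : Fin m) (j : Fin n), r ≤ (i : ℕ) → r ≤ (j : ℕ) → v i j = 0 := by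
  intro v hv i j hi hj
  let row : Fin (r + 1) → Fin m := Fin.lastCases i (Fin.castLE (hi.trans i.isLt.le))
  let col : Fin (r + 1) → Fin n := Fin.lastCases j (Fin.castLE (hj.trans j.isLt.le))
  have hGsub : G.submatrix row col = (1 : Matrix _ _ K).updateCol (Fin.last r) 0 :=
    submatrix_lastCases_castLE_eq_updateCol_one G hG hi hj _ _
  have hsingular (t : K) :
      det (t • v.submatrix row col + (1 : Matrix _ _ K).updateCol (Fin.last r) 0) = 0 := by
    rw [← hGsub, add_comm (t • _)]
    refine det_eq_zero_of_rank_lt_card ?_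
    calc ((G + t • v).submatrix row col).rank ≤ (G + t • v).rank := rank_submatrix_le _ _ _
      _ ≤ r := hrank _ (V.smul_mem t hv)
      _ < Fintype.card (Fin (r + 1)) := by simp
  have hcard : (Fintype.card (Fin (r + 1)) : Cardinal) < #K := by
    rw [Fintype.card_fin]
    exact lt_of_lt_of_le (by exact_mod_cast (show r + 1 < r + 2 by omega)) hK
  simpa [row, col] using
    apply_self_eq_zero_of_forall_det_smul_add_updateCol_one_eq_zero hcard _ _ hsingular

theorem stmt2 (K : Type*) [Field K] (m n r : ℕ)
    (hK : (r + 2 : Cardinal) ≤ Cardinal.mk K)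
    (hrm : r ≤ m) (hmn : m ≤ n)
    (G : Matrix (Fin m) (Fin n) K)
    (hG : ∀ i j, G i j = if (i : ℕ) = (j : ℕ) ∧ (i : ℕ) < r then 1 else 0)
    (V : Submodule K (Matrix (Fin m) (Fin n) K))
    (hrank : ∀ v ∈ V, (G + v).rank ≤ r) :
    ∀ v ∈ V, ∀ (i : Fin m) (j : Fin n), r ≤ (i : ℕ) → r ≤ (j : ℕ) → v i j = 0 :=
  stmt2_general K m n r hK G hG V hrank
end

section
/- Let K be a field, let n_1,…,n_k, q_1,…,q_k, m, r ∈ ℕ, and set h = 3m + n_1 + ⋯ + n_k. Let π_1, π_2, π_3 : K^h → K^{2m} be the projections onto coordinates {1,…,2m}, {m+1,…,3m}, and {1,…,m} ∪ {2m+1,…,3m} respectively, and let p_j : K^h → K^{n_j} be the projection onto the j-th block of the last n_1 + ⋯ + n_k coordinates. If V ⊆ K^h is a linear subspace with dim(π_i(V)) ≤ 2r for i = 1,2,3 and dim(p_j(V)) ≤ q_j for j = 1,…,k, then dim V ≤ Σ_{j=1}^{k} q_j + 3r. -/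
/-! The image `W` of `V` in the first `3m` coordinates has dim `V ≤ dim W + ∑ qⱼ`, because the
kernel of `V → W` embeds into the product of the block projections. Split the first `3m`
coordinates into blocks `A, B, C` of size `m`, so that `π₁, π₂, π₃` project onto `AB, BC, AC`.
Since `AC` and `B` cover all coordinates, `dim W ≤ dim π₃ W + dim π_B W`; since `π_B` factors
through `π₂` and vanishes on `ker π₁`, submodularity gives `dim W + dim π_B W ≤ dim π₁ W + dim π₂ W`.
Adding, `2 dim W ≤ 6r`. -/

open LinearMap Module Submodule

namespace Submodule

variable {K M N P Q : Type*} [DivisionRing K] [AddCommGroup M] [Module K M]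
  [AddCommGroup N] [Module K N] [AddCommGroup P] [Module K P] [AddCommGroup Q] [Module K Q]

theorem finrank_map_add_finrank_inf_ker (f : M →ₗ[K] N) (p : Submodule K M)
    [FiniteDimensional K p] : finrank K (p.map f) + finrank K ↥(p ⊓ ker f) = finrank K p := by
  rw [← finrank_range_add_finrank_ker (f.domRestrict p), range_domRestrict, ker_domRestrict,
    ← map_comap_subtype, finrank_map_subtype_eq]

theorem finrank_map_eq_of_injOn (f : M →ₗ[K] N) (p : Submodule K M) [FiniteDimensional K p]
    (hf : ∀ x ∈ p, f x = 0 → x = 0) : finrank K (p.map f) = finrank K p := by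
  have hker : p ⊓ ker f = ⊥ := eq_bot_iff.mpr fun x ⟨hx, hfx⟩ => hf x hx hfx
  have := finrank_map_add_finrank_inf_ker f p
  rwa [hker, finrank_bot, add_zero] at this

theorem finrank_add_finrank_map_comp_le (f : M →ₗ[K] N) (g : M →ₗ[K] P) (h : P →ₗ[K] Q)
    (p : Submodule K M) [FiniteDimensional K p] (hfg : ∀ x ∈ p, f x = 0 → g x = 0 → x = 0)
    (hfh : ∀ x ∈ p, f x = 0 → h (g x) = 0) :
    finrank K p + finrank K (p.map (h ∘ₗ g)) ≤ finrank K (p.map f) + finrank K (p.map g) := by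
  have hp := finrank_map_add_finrank_inf_ker f p
  have hg := finrank_map_add_finrank_inf_ker h (p.map g)
  have hinj : finrank K ((p ⊓ ker f).map g) = finrank K ↥(p ⊓ ker f) :=
    finrank_map_eq_of_injOn g _ fun x ⟨hx, hfx⟩ => hfg x hx hfx
  have hsub : (p ⊓ ker f).map g ≤ p.map g ⊓ ker h := by
    rintro _ ⟨x, ⟨hx, hfx⟩, rfl⟩
    exact ⟨mem_map_of_mem hx, hfh x hx hfx⟩
  rw [map_comp]
  have := finrank_mono hsub
  omega

theorem finrank_le_finrank_map_add_finrank_map (f : M →ₗ[K] N) (g : M →ₗ[K] P)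
    (p : Submodule K M) [FiniteDimensional K p] (hfg : ∀ x ∈ p, f x = 0 → g x = 0 → x = 0) :
    finrank K p ≤ finrank K (p.map f) + finrank K (p.map g) := by
  have := finrank_add_finrank_map_comp_le f g (0 : P →ₗ[K] P) p hfg (by simp)
  rwa [zero_comp, Submodule.map_zero, finrank_bot, add_zero] at this

theorem finrank_le_sum_finrank_map {J : Type*} [Fintype J] {N : J → Type*}
    [∀ j, AddCommGroup (N j)] [∀ j, Module K (N j)] (f : ∀ j, M →ₗ[K] N j)
    (p : Submodule K M) [FiniteDimensional K p] (hf : ∀ x ∈ p, (∀ j, f j x = 0) → x = 0) :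
    finrank K p ≤ ∑ j, finrank K (p.map (f j)) := by
  rw [← finrank_pi_fintype]
  refine finrank_le_finrank_of_injective (f := LinearMap.pi fun j => (f j).submoduleMap p) ?_
  rw [← ker_eq_bot, eq_bot_iff]
  intro x hx
  exact Subtype.ext (hf x x.2 fun j => congrArg Subtype.val (congrFun hx j))

end Submodule

theorem LinearMap.funLeft_eq_zero_iff {R M ι β : Type*} [Semiring R] [AddCommMonoid M]
    [Module R M] (f : β → ι) (x : ι → M) :
    funLeft R M f x = 0 ↔ ∀ i ∈ Set.range f, x i = 0 := by
  simp [funext_iff, funLeft_apply]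

theorem LinearMap.eq_zero_of_funLeft_eq_zero {R M ι β γ : Type*} [Semiring R] [AddCommMonoid M]
    [Module R M] {f : β → ι} {g : γ → ι} (hcover : ∀ i, i ∈ Set.range f ∨ i ∈ Set.range g)
    {x : ι → M} (hf : funLeft R M f x = 0) (hg : funLeft R M g x = 0) : x = 0 := by
  rw [funLeft_eq_zero_iff] at hf hg
  funext i
  exact (hcover i).elim (hf i) (hg i)

theorem LinearMap.funLeft_eq_zero_of_range_subset {R M ι β γ : Type*} [Semiring R]
    [AddCommMonoid M] [Module R M] {f : β → ι} {g : γ → ι} (hgf : Set.range g ⊆ Set.range f)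
    {x : ι → M} (hf : funLeft R M f x = 0) : funLeft R M g x = 0 := by
  rw [funLeft_eq_zero_iff] at hf ⊢
  exact fun i hi => hf i (hgf hi)

theorem Submodule.map_funLeft_comp {R M α β γ : Type*} [Semiring R] [AddCommMonoid M]
    [Module R M] (p : Submodule R (α → M)) (f : β → α) (g : γ → β) :
    p.map (funLeft R M (f ∘ g)) = (p.map (funLeft R M f)).map (funLeft R M g) := by
  rw [funLeft_comp, map_comp]

theorem Submodule.finrank_le_finrank_map_inl_add_sum {K α J : Type*} [DivisionRing K]
    [Fintype α] [Fintype J] {β : J → Type*} [∀ j, Fintype (β j)]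
    (V : Submodule K ((α ⊕ Σ j, β j) → K)) :
    finrank K V ≤ finrank K (V.map (funLeft K K Sum.inl))
      + ∑ j, finrank K (V.map (funLeft K K fun t : β j => Sum.inr ⟨j, t⟩)) := by
  have hV := finrank_le_finrank_map_add_finrank_map (funLeft K K Sum.inl)
    (funLeft K K Sum.inr) V fun _ _ => eq_zero_of_funLeft_eq_zero fun i => by
      rcases i with a | b
      exacts [Or.inl ⟨a, rfl⟩, Or.inr ⟨b, rfl⟩]
  have hblocks := finrank_le_sum_finrank_map (fun j => funLeft K K (Sigma.mk j : β j → _))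
    (V.map (funLeft K K Sum.inr)) fun x _ hx => by
      funext ⟨j, t⟩
      exact (funLeft_eq_zero_iff _ x).mp (hx j) _ ⟨t, rfl⟩
  refine hV.trans (Nat.add_le_add_left (hblocks.trans_eq (Finset.sum_congr rfl fun j _ => ?_)) _)
  rw [← map_funLeft_comp]
  rfl

/- The blocks are `A = [0, m)`, `B = [m, 2m)` and `C = [2m, 3m)`. -/
namespace Fin

def blockAB (m : ℕ) (i : Fin (2 * m)) : Fin (3 * m) := ⟨i, by omega⟩

def blockBC (m : ℕ) (i : Fin (2 * m)) : Fin (3 * m) := ⟨m + i, by omega⟩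

def blockAC (m : ℕ) (i : Fin (2 * m)) : Fin (3 * m) :=
  ⟨if (i : ℕ) < m then i else m + i, by split <;> omega⟩

def blockB (m : ℕ) (i : Fin m) : Fin (3 * m) := ⟨m + i, by omega⟩

theorem blockBC_castLE (m : ℕ) :
    blockBC m ∘ castLE (by omega : m ≤ 2 * m) = blockB m := rfl

theorem range_blockAB_union_range_blockBC (m : ℕ) (i : Fin (3 * m)) :
    i ∈ Set.range (blockAB m) ∨ i ∈ Set.range (blockBC m) := by
  by_cases hi : (i : ℕ) < 2 * m
  · exact Or.inl ⟨⟨i, hi⟩, rfl⟩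
  · exact Or.inr ⟨⟨i - m, by omega⟩, Fin.ext (by simp [blockBC]; omega)⟩

theorem range_blockAC_union_range_blockB (m : ℕ) (i : Fin (3 * m)) :
    i ∈ Set.range (blockAC m) ∨ i ∈ Set.range (blockB m) := by
  by_cases hA : (i : ℕ) < m
  · exact Or.inl ⟨⟨i, by omega⟩, Fin.ext (by simp [blockAC, hA])⟩
  by_cases hB : (i : ℕ) < 2 * m
  · exact Or.inr ⟨⟨i - m, by omega⟩, Fin.ext (by simp [blockB]; omega)⟩
  · refine Or.inl ⟨⟨i - m, by omega⟩, Fin.ext ?_⟩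
    simp only [blockAC]
    rw [if_neg (by omega)]
    omega

theorem range_blockB_subset (m : ℕ) : Set.range (blockB m) ⊆ Set.range (blockAB m) := by
  rintro _ ⟨i, rfl⟩
  exact ⟨⟨m + i, by omega⟩, rfl⟩

end Fin

theorem Submodule.two_mul_finrank_le_finrank_map_blocks {K : Type*} [DivisionRing K] (m : ℕ)
    (W : Submodule K (Fin (3 * m) → K)) :
    2 * finrank K W ≤ finrank K (W.map (funLeft K K (Fin.blockAB m)))
      + finrank K (W.map (funLeft K K (Fin.blockBC m)))
      + finrank K (W.map (funLeft K K (Fin.blockAC m))) := by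
  have hcover := finrank_le_finrank_map_add_finrank_map (funLeft K K (Fin.blockAC m))
    (funLeft K K (Fin.blockB m)) W fun _ _ =>
      eq_zero_of_funLeft_eq_zero (Fin.range_blockAC_union_range_blockB m)
  have hsub := finrank_add_finrank_map_comp_le (funLeft K K (Fin.blockAB m))
    (funLeft K K (Fin.blockBC m)) (funLeft K K (Fin.castLE (by omega : m ≤ 2 * m))) W
    (fun _ _ => eq_zero_of_funLeft_eq_zero (Fin.range_blockAB_union_range_blockBC m))
    fun x _ hx => by
      rw [← comp_apply, ← funLeft_comp, Fin.blockBC_castLE]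
      exact funLeft_eq_zero_of_range_subset (Fin.range_blockB_subset m) hx
  rw [← funLeft_comp, Fin.blockBC_castLE] at hsub
  omega

theorem stmt4 (K : Type*) [Field K] (k m r : ℕ) (n q : Fin k → ℕ)
    (V : Submodule K ((Fin (3 * m) ⊕ (Σ j : Fin k, Fin (n j))) → K))
    (h1 : Module.finrank K (V.map (LinearMap.funLeft K K
      (fun i : Fin (2 * m) => Sum.inl ⟨(i : ℕ), by have := i.isLt; omega⟩))) ≤ 2 * r)
    (h2 : Module.finrank K (V.map (LinearMap.funLeft K K
      (fun i : Fin (2 * m) => Sum.inl ⟨m + (i : ℕ), by have := i.isLt; omega⟩))) ≤ 2 * r)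
    (h3 : Module.finrank K (V.map (LinearMap.funLeft K K
      (fun i : Fin (2 * m) => Sum.inl ⟨if (i : ℕ) < m then (i : ℕ) else m + (i : ℕ),
        by have := i.isLt; split <;> omega⟩))) ≤ 2 * r)
    (hp : ∀ j : Fin k, Module.finrank K (V.map (LinearMap.funLeft K K
      (fun t : Fin (n j) => Sum.inr ⟨j, t⟩))) ≤ q j) :
    Module.finrank K V ≤ (∑ j, q j) + 3 * r := by
  have hsplit := V.finrank_le_finrank_map_inl_add_sum
  have hblocks := (V.map (funLeft K K Sum.inl)).two_mul_finrank_le_finrank_map_blocks m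
  rw [← map_funLeft_comp, ← map_funLeft_comp, ← map_funLeft_comp] at hblocks
  have hq : ∑ j, finrank K (V.map (funLeft K K fun t : Fin (n j) => Sum.inr ⟨j, t⟩)) ≤ ∑ j, q j :=
    Finset.sum_le_sum fun j _ => hp j
  change finrank K (V.map (funLeft K K (Sum.inl ∘ Fin.blockAB m))) ≤ 2 * r at h1
  change finrank K (V.map (funLeft K K (Sum.inl ∘ Fin.blockBC m))) ≤ 2 * r at h2
  change finrank K (V.map (funLeft K K (Sum.inl ∘ Fin.blockAC m))) ≤ 2 * r at h3
  omega
end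

section
/- Let K be a field and let S be an affine subspace of K^{m×n} such that every matrix in S is in row echelon form. Let r = max{rk(A) : A ∈ S}. Define Z(S,i) = {j : A_{i,j} ≠ 0 for some A ∈ S} and P = {i : Z(S,i) ≠ ∅}. Then P = {1,…,r}. -/
/-- A matrix is in row echelon form: whenever a lower row has a nonzero entry in
column `j`, every higher row has a nonzero entry strictly to the left of `j`
(equivalently, zero rows are at the bottom and leading entries move strictly right). -/
def RowEchelon {K : Type*} [Field K] {m n : ℕ} (A : Matrix (Fin m) (Fin n) K) : Prop :=
  ∀ i₁ i₂ : Fin m, i₁ < i₂ → ∀ j : Fin n, A i₂ j ≠ 0 → ∃ j' : Fin n, j' < j ∧ A i₁ j' ≠ 0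

open Submodule Module in
/-- rank lower bound: first `i+1` rows nonzero ⇒ rank ≥ i+1 -/
lemma echelon_rank_lb {K : Type*} [Field K] {m n : ℕ} {A : Matrix (Fin m) (Fin n) K}
    (hA : RowEchelon A) (i : Fin m) (hrows : ∀ k : Fin m, k ≤ i → ∃ j, A k j ≠ 0) :
    (i : ℕ) + 1 ≤ A.rank := by
  classical
  set f : Fin ((i : ℕ) + 1) → (Fin n → K) :=
    fun k => A ⟨k, lt_of_lt_of_le k.isLt (by omega)⟩ with hf
  -- the row index in Fin m corresponding to k
  have hidx : ∀ k : Fin ((i : ℕ) + 1), (⟨k, lt_of_lt_of_le k.isLt (by omega)⟩ : Fin m) ≤ i := by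
    intro k; exact Fin.mk_le_of_le_val (by omega)
  -- leading column of each of these rows
  have hlead : ∀ k : Fin ((i : ℕ) + 1), ∃ j : Fin n,
      A ⟨k, lt_of_lt_of_le k.isLt (by omega)⟩ j ≠ 0 ∧
      ∀ j' : Fin n, j' < j → A ⟨k, lt_of_lt_of_le k.isLt (by omega)⟩ j' = 0 := by
    intro k
    obtain ⟨j, hj⟩ := hrows _ (hidx k)
    set s : Finset (Fin n) := Finset.univ.filter (fun j => A ⟨k, lt_of_lt_of_le k.isLt (by omega)⟩ j ≠ 0)
    have hs : s.Nonempty := ⟨j, by simp [s, hj]⟩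
    refine ⟨s.min' hs, ?_, ?_⟩
    · have := s.min'_mem hs; simpa [s] using this
    · intro j' hj'
      by_contra hne
      exact absurd (s.min'_le j' (by simp [s, hne])) (not_le.mpr hj')
  choose lead hlead1 hlead2 using hlead
  have hli : LinearIndependent K f := by
    rw [Fintype.linearIndependent_iff]
    intro g hg
    have key : ∀ t : ℕ, ∀ k : Fin ((i : ℕ) + 1), (k : ℕ) = t → g k = 0 := by
      intro t
      induction t using Nat.strong_induction_on with
      | _ t ih =>
        intro k hk
        have hsum := congrFun hg (lead k)
        simp only [Finset.sum_apply, Pi.smul_apply, smul_eq_mul, Pi.zero_apply] at hsum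
        rw [Finset.sum_eq_single k] at hsum
        · have hnz := hlead1 k
          rcases mul_eq_zero.mp hsum with h | h
          · exact h
          · exact absurd h (hlead1 k)
        · intro b _ hbk
          rcases lt_or_gt_of_ne (fun h : (b:ℕ) = (k:ℕ) => hbk (Fin.ext h)) with hlt | hgt
          · rw [ih b (by omega) b rfl, zero_mul]
          · -- b > k : A (row b) (lead k) = 0 by echelon
            have hz : A ⟨b, lt_of_lt_of_le b.isLt (by omega)⟩ (lead k) = 0 := by
              by_contra hne
              obtain ⟨j', hj'lt, hj'ne⟩ := hA ⟨k, lt_of_lt_of_le k.isLt (by omega)⟩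
                ⟨b, lt_of_lt_of_le b.isLt (by omega)⟩ (Fin.mk_lt_mk.mpr (by omega)) _ hne
              exact hj'ne (hlead2 k j' hj'lt)
            rw [hf]; simp only; rw [hz, mul_zero]
        · intro h; exact absurd (Finset.mem_univ k) h
    intro k; exact key k k rfl
  have h1 : finrank K (span K (Set.range f)) = (i : ℕ) + 1 := by
    rw [finrank_span_eq_card hli, Fintype.card_fin]
  have h2 : span K (Set.range f) ≤ span K (Set.range A) := by
    apply span_mono
    rintro _ ⟨k, rfl⟩
    exact ⟨_, rfl⟩
  calc (i : ℕ) + 1 = finrank K (span K (Set.range f)) := h1.symm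
    _ ≤ finrank K (span K (Set.range A)) := Submodule.finrank_mono h2
    _ = A.rank := (Matrix.rank_eq_finrank_span_row A).symm

open Submodule Module in
/-- rank upper bound: row `i` zero ⇒ rank ≤ i -/
lemma echelon_rank_ub {K : Type*} [Field K] {m n : ℕ} {A : Matrix (Fin m) (Fin n) K}
    (hA : RowEchelon A) (i : Fin m) (hrow : ∀ j, A i j = 0) :
    A.rank ≤ (i : ℕ) := by
  classical
  have hzero : ∀ k : Fin m, i ≤ k → ∀ j, A k j = 0 := by
    intro k hk j
    rcases eq_or_lt_of_le hk with h | h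
    · rw [← h]; exact hrow j
    · by_contra hne
      obtain ⟨j', _, hj'⟩ := hA i k h j hne
      exact hj' (hrow j')
  by_cases hi0 : (i : ℕ) = 0
  · have : A = 0 := by
      ext k j
      exact hzero k (Fin.le_def.mpr (by omega)) j
    simp [this, hi0]
  · set f : Fin (i : ℕ) → (Fin n → K) := fun k => A ⟨k, lt_trans k.isLt i.isLt⟩ with hf
    have hsub : Set.range A ⊆ span K (Set.range f) := by
      rintro _ ⟨k, rfl⟩
      by_cases hk : (k : ℕ) < (i : ℕ)
      · exact subset_span ⟨⟨k, hk⟩, rfl⟩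
      · have : A k = 0 := funext (hzero k (Fin.le_def.mpr (by omega)))
        rw [this]; exact Submodule.zero_mem _
    calc A.rank = finrank K (span K (Set.range A)) := Matrix.rank_eq_finrank_span_row A
      _ ≤ finrank K (span K (Set.range f)) :=
          Submodule.finrank_mono (span_le.mpr hsub)
      _ ≤ Fintype.card (Fin (i : ℕ)) := finrank_range_le_card f
      _ = (i : ℕ) := Fintype.card_fin _

theorem stmt8 (K : Type*) [Field K] (m n r : ℕ)
    (S : AffineSubspace K (Matrix (Fin m) (Fin n) K))
    (hS : (S : Set (Matrix (Fin m) (Fin n) K)).Nonempty)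
    (hech : ∀ A ∈ S, RowEchelon A)
    (hmax : IsGreatest {k : ℕ | ∃ A ∈ S, A.rank = k} r) :
    ∀ i : Fin m, (∃ j : Fin n, ∃ A ∈ S, A i j ≠ 0) ↔ (i : ℕ) < r := by
  intro i
  constructor
  · rintro ⟨j, A, hAS, hne⟩
    have hrows : ∀ k : Fin m, k ≤ i → ∃ j, A k j ≠ 0 := by
      intro k hk
      rcases eq_or_lt_of_le hk with h | h
      · exact ⟨j, h ▸ hne⟩
      · obtain ⟨j', _, hj'⟩ := hech A hAS k i h j hne
        exact ⟨j', hj'⟩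
    have h1 := echelon_rank_lb (hech A hAS) i hrows
    have h2 : A.rank ≤ r := hmax.2 ⟨A, hAS, rfl⟩
    omega
  · intro hi
    obtain ⟨A, hAS, hrank⟩ := hmax.1
    by_contra hno
    push_neg at hno
    have hrow : ∀ j, A i j = 0 := by
      intro j
      by_contra hne
      exact hne (hno j A hAS)
    have := echelon_rank_ub (hech A hAS) i hrow
    omega
end

section
/- Let K be a field with |K| ≥ r+1 and r ≤ min{m,n}. Then the maximal dimension of an affine subspace S of K^{m×n} such that every element of S is in row echelon form and every element of S has rank exactly r equals r·n − r(r+1)/2. -/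
section

open Finset Module

theorem rowEchelon_iff_isRowEchelon {K : Type*} [Field K] {m n : ℕ}
    (A : Matrix (Fin m) (Fin n) K) : RowEchelon A ↔ A.IsRowEchelon := by
  refine ⟨fun h i₁ i₂ hlt j₂ hz => ?_, fun h i₁ i₂ hlt j hne => ?_⟩
  · by_contra hne
    obtain ⟨j₁, hj₁, hne₁⟩ := h i₁ i₂ hlt j₂ hne
    exact hne₁ (hz j₁ hj₁)
  · by_contra! hz
    exact hne (h hlt hz)

namespace Matrix

variable {m n R : Type*}

theorem IsRowEchelon.isPivotedBy_min [Fintype n] [LT m] [LinearOrder n] [Zero R]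
    [DecidableEq R] {A : Matrix m n R} (hA : A.IsRowEchelon) :
    A.IsPivotedBy fun i => ({j | A i j ≠ 0} : Finset n).min := by
  refine ⟨hA, fun i => ⟨fun j hj => ?_, fun c hc => ?_⟩⟩
  · by_contra hne
    exact (Finset.min_le (mem_filter.2 ⟨mem_univ j, hne⟩)).not_gt hj
  · exact (mem_filter.1 (Finset.mem_of_min hc)).2

open Classical in
theorem IsRowEchelon.rank_eq_card [Fintype m] [LinearOrder m] [Fintype n] [LinearOrder n]
    [CommRing R] [IsDomain R] {A : Matrix m n R} (hA : A.IsRowEchelon) :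
    A.rank = #{i | A i ≠ 0} := by
  rw [hA.isPivotedBy_min.rank_eq]
  simp only [ne_eq, hA.isPivotedBy_min.eq_top_iff]

section Fin

variable {m n : ℕ}

theorem IsRowEchelon.le_of_ne_zero [Zero R] {A : Matrix (Fin m) (Fin n) R}
    (hA : A.IsRowEchelon) {i : Fin m} {j : Fin n} (h : A i j ≠ 0) : (i : ℕ) ≤ j := by
  induction i using WellFoundedLT.induction generalizing j with
  | ind i ih =>
    rcases Nat.eq_zero_or_pos i with h0 | hpos
    · simp [h0]
    let i' : Fin m := ⟨i - 1, by omega⟩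
    obtain ⟨j', hj', hne⟩ : ∃ j' < j, A i' j' ≠ 0 := by
      by_contra! hz
      exact h (hA (show i' < i from Fin.lt_def.2 (by simp [i']; omega)) hz)
    have := ih i' (Fin.lt_def.2 (by simp [i']; omega)) hne
    simp only [i'] at this
    omega

theorem IsRowEchelon.row_ne_zero_iff_lt_rank [CommRing R] [IsDomain R]
    {A : Matrix (Fin m) (Fin n) R} (hA : A.IsRowEchelon) {i : Fin m} :
    A i ≠ 0 ↔ (i : ℕ) < A.rank := by
  classical
  rw [hA.rank_eq_card]
  constructor
  · intro h
    calc (i : ℕ) < #(Iic i) := by simp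
      _ ≤ #{i | A i ≠ 0} := card_le_card fun i' hi' => by
          obtain hlt | rfl := (mem_Iic.1 hi').lt_or_eq
          · exact mem_filter.2 ⟨mem_univ _, mt (hA.row_eq_zero_of_lt hlt) h⟩
          · simpa using h
  · intro h h0
    have : #{i | A i ≠ 0} ≤ #(Iio i) := card_le_card fun i' hi' => by
      refine mem_Iio.2 (lt_of_not_ge fun hle => (mem_filter.1 hi').2 ?_)
      obtain hlt | rfl := hle.lt_or_eq
      · exact hA.row_eq_zero_of_lt hlt h0
      · exact h0
    rw [Fin.card_Iio] at this
    omega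

theorem IsRowEchelon.of_support_of_diag [Zero R] {r : ℕ} {B : Matrix (Fin m) (Fin n) R}
    (hsupp : ∀ i j, B i j ≠ 0 → (i : ℕ) < r ∧ (i : ℕ) ≤ j)
    (hdiag : ∀ (i : Fin m) (j : Fin n), (i : ℕ) < r → (i : ℕ) = j → B i j ≠ 0) :
    B.IsRowEchelon := by
  intro i₁ i₂ hlt j₂ hz
  by_contra hne
  have hlt' : (i₁ : ℕ) < i₂ := hlt
  obtain ⟨hr, hle⟩ := hsupp _ _ hne
  exact hdiag i₁ ⟨i₁, by omega⟩ (by omega) rfl (hz _ (Fin.lt_def.2 (by simp; omega)))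

theorem IsRowEchelon.rank_eq_of_row_ne_zero_iff [CommRing R] [IsDomain R]
    {r : ℕ} {A : Matrix (Fin m) (Fin n) R} (hA : A.IsRowEchelon) (hrm : r ≤ m)
    (hrow : ∀ i, A i ≠ 0 ↔ (i : ℕ) < r) : A.rank = r := by
  classical
  rw [hA.rank_eq_card, filter_congr fun i _ => hrow i, Fin.card_filter_val_lt, min_eq_right hrm]

end Fin

variable (K : Type*) [Field K] [Fintype m] [Fintype n]

noncomputable def supported (s : Set (m × n)) : Submodule K (Matrix m n K) :=
  Submodule.span K (stdBasis K m n '' s)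

variable {K}

theorem stdBasis_repr_apply (A : Matrix m n K) (i : m) (j : n) :
    (stdBasis K m n).repr A (i, j) = A i j := by
  simp [stdBasis]

theorem mem_supported {s : Set (m × n)} {A : Matrix m n K} :
    A ∈ supported K s ↔ ∀ i j, (i, j) ∉ s → A i j = 0 := by
  rw [supported, Basis.mem_span_image]
  simp only [Set.subset_def, Finset.mem_coe, Finsupp.mem_support_iff, Prod.forall,
    stdBasis_repr_apply, not_imp_comm]

theorem finrank_supported (s : Finset (m × n)) :
    finrank K (supported K (s : Set (m × n))) = #s := by
  rw [supported, Set.image_eq_range,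
    finrank_span_eq_card (b := fun x : (s : Set (m × n)) => stdBasis K m n x)
      ((stdBasis K m n).linearIndependent.comp _ Subtype.val_injective)]
  simp

theorem updateRow_zero_mem_supported [DecidableEq m] {s : Set (m × n)} {A : Matrix m n K}
    (hA : A ∈ supported K s) (i : m) : updateRow 0 i (A i) ∈ supported K s := by
  rw [mem_supported] at hA ⊢
  intro i' j hs
  rw [updateRow_apply]
  split_ifs with h
  · subst h
    exact hA i' j hs
  · rfl

theorem finrank_direction_add_card_le [DecidableEq m] {S : AffineSubspace K (Matrix m n K)}
    {A : Matrix m n K} (hA : A ∈ S) {I : Finset m} (hI : ∀ B ∈ S, ∀ i ∈ I, B i ≠ 0)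
    {W : Submodule K (Matrix m n K)} (hSW : S.direction ≤ W)
    (hAW : ∀ i ∈ I, updateRow 0 i (A i) ∈ W) :
    finrank K S.direction + #I ≤ finrank K W := by
  set E : I → Matrix m n K := fun i => updateRow 0 i (A i)
  have hentry : ∀ (c : I → K) (i : I) (j : n), (∑ k, c k • E k) i j = c i * A i j := by
    intro c i j
    rw [sum_apply, Fintype.sum_eq_single i fun k hk => ?_]
    · simp [E]
    · simp [E, updateRow_apply, Subtype.coe_ne_coe.2 hk.symm]
  -- A combination with `c i ≠ 0` could be subtracted from `A`, within `S`, to kill row `i`.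
  have key : ∀ c : I → K, ∑ k, c k • E k ∈ S.direction → c = 0 := by
    intro c hc
    by_contra! hne
    obtain ⟨i, hi⟩ := Function.ne_iff.1 hne
    have hmem : -(c i)⁻¹ • ∑ k, c k • E k +ᵥ A ∈ S :=
      AffineSubspace.vadd_mem_of_mem_direction (S.direction.smul_mem _ hc) hA
    refine hI _ hmem i i.2 (funext fun j => ?_)
    rw [vadd_eq_add, add_apply, smul_apply, hentry, smul_eq_mul, ← mul_assoc, neg_mul,
      inv_mul_cancel₀ hi, neg_one_mul, neg_add_cancel, Pi.zero_apply]
  have hli : LinearIndependent K E := Fintype.linearIndependent_iff.2 fun c hc =>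
    congrFun (key c (hc ▸ S.direction.zero_mem))
  have hdisj : S.direction ⊓ Submodule.span K (Set.range E) = ⊥ := by
    rw [eq_bot_iff]
    rintro x ⟨hx, hxE⟩
    obtain ⟨c, rfl⟩ := (Submodule.mem_span_range_iff_exists_fun K).1 hxE
    simp [key c hx]
  calc finrank K S.direction + #I
      = finrank K ↥(S.direction ⊔ Submodule.span K (Set.range E)) := by
        rw [← add_zero (finrank K ↥(S.direction ⊔ _)), ← finrank_bot K (Matrix m n K),
          ← hdisj, Submodule.finrank_sup_add_finrank_inf_eq, finrank_span_eq_card hli,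
          Fintype.card_coe]
    _ ≤ finrank K W := Submodule.finrank_mono <|
        sup_le hSW (Submodule.span_le.2 (Set.range_subset_iff.2 fun i => hAW i i.2))

end Matrix

-- `d = 0`: where a rank-`r` echelon matrix can be nonzero; `d = 1`: the direction of the extremal
-- affine space.
def upperTrapezoid (m n r d : ℕ) : Finset (Fin m × Fin n) :=
  {p | (p.1 : ℕ) < r ∧ (p.1 : ℕ) + d ≤ p.2}

theorem mem_upperTrapezoid {m n r d : ℕ} {p : Fin m × Fin n} :
    p ∈ upperTrapezoid m n r d ↔ (p.1 : ℕ) < r ∧ (p.1 : ℕ) + d ≤ p.2 := by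
  simp [upperTrapezoid]

theorem Fin.card_filter_le_val (n k : ℕ) : #{j : Fin n | k ≤ (j : ℕ)} = n - k := by
  have := card_filter_add_card_filter_not (s := univ) fun j : Fin n => k ≤ (j : ℕ)
  simp only [not_le, Fin.card_filter_val_lt, card_univ, Fintype.card_fin] at this
  omega

theorem card_upperTrapezoid {m n r : ℕ} (d : ℕ) (hrm : r ≤ m) :
    #(upperTrapezoid m n r d) = ∑ k ∈ range r, (n - (k + d)) := by
  have hfiber : ∀ i : Fin m, #{j : Fin n | (i : ℕ) < r ∧ (i : ℕ) + d ≤ j} =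
      if (i : ℕ) < r then n - (i + d) else 0 := by
    intro i
    split_ifs with hi
    · simp [hi, Fin.card_filter_le_val]
    · simp [hi]
  rw [upperTrapezoid, card_filter, Fintype.sum_prod_type]
  simp_rw [← card_filter, hfiber]
  rw [Fin.sum_univ_eq_sum_range (fun k => if k < r then n - (k + d) else 0),
    ← sum_range_add_sum_Ico _ hrm, sum_congr rfl fun k hk => if_pos (mem_range.1 hk),
    sum_eq_zero fun k hk => if_neg (by simp at hk; omega), add_zero]

theorem card_upperTrapezoid_one {m n r : ℕ} (hrm : r ≤ m) (hrn : r ≤ n) :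
    #(upperTrapezoid m n r 1) = r * n - r * (r + 1) / 2 := by
  rw [card_upperTrapezoid 1 hrm]
  have hsum : ∑ k ∈ range r, (n - (k + 1)) + ∑ k ∈ range r, (k + 1) = r * n := by
    rw [← sum_add_distrib, sum_congr rfl fun k hk => Nat.sub_add_cancel (by simp at hk; omega),
      sum_const, card_range, smul_eq_mul]
  have hgauss : ∑ k ∈ range r, (k + 1) = r * (r + 1) / 2 := by
    have := sum_range_succ' (fun k => k) r
    rw [sum_range_id, add_zero, Nat.add_sub_cancel, mul_comm] at this
    exact this.symm
  omega

theorem card_upperTrapezoid_zero {m n r : ℕ} (hrm : r ≤ m) (hrn : r ≤ n) :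
    #(upperTrapezoid m n r 0) = #(upperTrapezoid m n r 1) + r := by
  have hterm : ∀ k ∈ range r, n - (k + 0) = n - (k + 1) + 1 := fun k hk => by
    simp at hk; omega
  rw [card_upperTrapezoid 0 hrm, card_upperTrapezoid 1 hrm, sum_congr rfl hterm, sum_add_distrib,
    sum_const, card_range, smul_eq_mul, mul_one]

open Matrix

variable {K : Type*} [Field K] {m n r : ℕ}

theorem finrank_direction_le_of_rowEchelon_of_rank_eq
    {S : AffineSubspace K (Matrix (Fin m) (Fin n) K)} {A : Matrix (Fin m) (Fin n) K} (hA : A ∈ S)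
    (hech : ∀ B ∈ S, RowEchelon B) (hrank : ∀ B ∈ S, B.rank = r) (hrm : r ≤ m)
    (hrn : r ≤ n) :
    finrank K S.direction ≤ r * n - r * (r + 1) / 2 := by
  classical
  have hech' : ∀ B ∈ S, B.IsRowEchelon := fun B hB =>
    (rowEchelon_iff_isRowEchelon B).1 (hech B hB)
  have hrow : ∀ B ∈ S, ∀ i, B i ≠ 0 ↔ (i : ℕ) < r := fun B hB i => by
    rw [(hech' B hB).row_ne_zero_iff_lt_rank, hrank B hB]
  have hW : ∀ B ∈ S, B ∈ supported K (upperTrapezoid m n r 0) := by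
    intro B hB
    refine mem_supported.2 fun i j hij => by_contra fun hne => hij ?_
    have hi := (hrow B hB i).1 fun h => hne (congrFun h j)
    have hle := (hech' B hB).le_of_ne_zero hne
    exact mem_upperTrapezoid.2 ⟨hi, by omega⟩
  have hdir : S.direction ≤ supported K (upperTrapezoid m n r 0) := by
    intro D hD
    obtain ⟨B, hB, C, hC, rfl⟩ := (AffineSubspace.mem_direction_iff_eq_vsub ⟨A, hA⟩ D).1 hD
    exact sub_mem (hW B hB) (hW C hC)
  have := finrank_direction_add_card_le hA (I := {i | (i : ℕ) < r})
    (fun B hB i hi => (hrow B hB i).2 (by simpa using hi)) hdir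
    (fun i _ => updateRow_zero_mem_supported (hW A hA) i)
  rw [finrank_supported, card_upperTrapezoid_zero hrm hrn, card_upperTrapezoid_one hrm hrn,
    Fin.card_filter_val_lt, min_eq_right hrm] at this
  omega

theorem exists_affineSubspace_rowEchelon_rank_eq (hrm : r ≤ m) (hrn : r ≤ n) :
    ∃ S : AffineSubspace K (Matrix (Fin m) (Fin n) K),
      (S : Set (Matrix (Fin m) (Fin n) K)).Nonempty ∧
      (∀ A ∈ S, RowEchelon A) ∧ (∀ A ∈ S, A.rank = r) ∧
      finrank K S.direction = r * n - r * (r + 1) / 2 := by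
  classical
  let A₀ : Matrix (Fin m) (Fin n) K :=
    of fun i j => if (i : ℕ) = j ∧ (i : ℕ) < r then 1 else 0
  let S := AffineSubspace.mk' A₀ (supported K (upperTrapezoid m n r 1))
  have hS : ∀ B ∈ S, ∀ (i : Fin m) (j : Fin n),
      ¬((i : ℕ) < r ∧ (i : ℕ) + 1 ≤ j) → B i j = A₀ i j := by
    intro B hB i j h
    have := mem_supported.1 (AffineSubspace.mem_mk'.1 hB) i j
      (by simpa [mem_upperTrapezoid] using h)
    rwa [vsub_eq_sub, Matrix.sub_apply, sub_eq_zero] at this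
  have hsupp : ∀ B ∈ S, ∀ i j, B i j ≠ 0 → (i : ℕ) < r ∧ (i : ℕ) ≤ j := by
    intro B hB i j hne
    by_cases h : (i : ℕ) < r ∧ (i : ℕ) + 1 ≤ j
    · omega
    rw [hS B hB i j h] at hne
    by_contra hout
    exact hne (if_neg (by omega))
  have hdiag : ∀ B ∈ S, ∀ (i : Fin m) (j : Fin n),
      (i : ℕ) < r → (i : ℕ) = j → B i j ≠ 0 := by
    intro B hB i j hi hij
    rw [hS B hB i j (by omega)]
    simp only [A₀, of_apply, if_pos (And.intro hij hi)]
    exact one_ne_zero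
  have hech : ∀ B ∈ S, B.IsRowEchelon := fun B hB =>
    IsRowEchelon.of_support_of_diag (hsupp B hB) (hdiag B hB)
  have hrow : ∀ B ∈ S, ∀ i, B i ≠ 0 ↔ (i : ℕ) < r := by
    refine fun B hB i => ⟨fun h => ?_,
      fun hi h => hdiag B hB i ⟨i, by omega⟩ hi rfl (congrFun h _)⟩
    obtain ⟨j, hj⟩ := Function.ne_iff.1 h
    exact (hsupp B hB i j hj).1
  refine ⟨S, ⟨A₀, AffineSubspace.self_mem_mk' _ _⟩,
    fun B hB => (rowEchelon_iff_isRowEchelon B).2 (hech B hB),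
    fun B hB => (hech B hB).rank_eq_of_row_ne_zero_iff hrm (hrow B hB), ?_⟩
  rw [AffineSubspace.direction_mk', finrank_supported, card_upperTrapezoid_one hrm hrn]

end

theorem stmt10_general (K : Type*) [Field K] (m n r : ℕ)
    (hrm : r ≤ m) (hrn : r ≤ n) :
    IsGreatest {d : ℕ | ∃ S : AffineSubspace K (Matrix (Fin m) (Fin n) K),
        (S : Set (Matrix (Fin m) (Fin n) K)).Nonempty ∧
        (∀ A ∈ S, RowEchelon A) ∧ (∀ A ∈ S, A.rank = r) ∧
        d = Module.finrank K S.direction}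
      (r * n - r * (r + 1) / 2) := by
  refine ⟨?_, ?_⟩
  · obtain ⟨S, hne, hech, hrank, hdim⟩ := exists_affineSubspace_rowEchelon_rank_eq (K := K) hrm hrn
    exact ⟨S, hne, hech, hrank, hdim.symm⟩
  · rintro d ⟨S, ⟨A, hA⟩, hech, hrank, rfl⟩
    exact finrank_direction_le_of_rowEchelon_of_rank_eq hA hech hrank hrm hrn

theorem stmt10 (K : Type*) [Field K] (m n r : ℕ)
    (hK : (r + 1 : Cardinal) ≤ Cardinal.mk K)
    (hrm : r ≤ m) (hrn : r ≤ n) :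
    IsGreatest {d : ℕ | ∃ S : AffineSubspace K (Matrix (Fin m) (Fin n) K),
        (S : Set (Matrix (Fin m) (Fin n) K)).Nonempty ∧
        (∀ A ∈ S, RowEchelon A) ∧ (∀ A ∈ S, A.rank = r) ∧
        d = Module.finrank K S.direction}
      (r * n - r * (r + 1) / 2) :=
  stmt10_general K m n r hrm hrn
end

section
/- Let K be a field with |K| ≥ r+1 and s < r ≤ min{m,n}. Then every affine subspace S of K^{m×n} whose elements are all in row echelon form and which satisfies min{rk(A): A∈S} = s and max{rk(A): A∈S} = r has dimension at most r·n − r(r+1)/2 + 1. -/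
/-!
Every matrix of `S` is zero below the diagonal and, having rank at most `r`, outside its first `r`
rows. In an echelon matrix a zero diagonal entry forces all later diagonal entries to vanish, so
the diagonals of the first `r` rows of the matrices of `S` form an affine subspace of `K^r` of
dimension at most one. The only other free entries are the `rn - r(r+1)/2` entries strictly above
the diagonal in the first `r` rows.
-/

open Finset Module

theorem Finset.sum_range_sub_one_sub_add_triangle {n r : ℕ} (h : r ≤ n) :
    ∑ i ∈ range r, (n - 1 - i) + r * (r + 1) / 2 = r * n := by
  induction r with
  | zero => simp
  | succ r ih =>
    have h1 : (r + 1) * (r + 1 + 1) / 2 = r * (r + 1) / 2 + (r + 1) := by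
      rw [show (r + 1) * (r + 1 + 1) = r * (r + 1) + 2 * (r + 1) by ring]
      omega
    rw [sum_range_succ, h1, add_mul, ← ih (by omega)]
    omega

theorem Fintype.card_sigma_castLE_lt_add_triangle {r n : ℕ} (hrn : r ≤ n) :
    Fintype.card ((i : Fin r) × {j : Fin n // Fin.castLE hrn i < j}) + r * (r + 1) / 2 =
      r * n := by
  simp only [Fintype.card_sigma, Fintype.card_subtype, filter_lt_eq_Ioi, Fin.card_Ioi,
    Fin.val_castLE]
  rw [Fin.sum_univ_eq_sum_range (fun i ↦ n - 1 - i), sum_range_sub_one_sub_add_triangle hrn]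

theorem AffineSubspace.direction_le_ker {k V W : Type*} [Ring k] [AddCommGroup V] [Module k V]
    [AddCommGroup W] [Module k W] {S : AffineSubspace k V} (f : V →ₗ[k] W)
    (hf : ∀ x ∈ S, f x = 0) : S.direction ≤ LinearMap.ker f := by
  rw [direction_eq_vectorSpan, vectorSpan_def, Submodule.span_le]
  rintro _ ⟨x, hx, y, hy, rfl⟩
  simp [hf x hx, hf y hy]

theorem AffineSubspace.finrank_direction_le_one_of_forall_eq_zero {K ι : Type*} [Field K]
    [LinearOrder ι] [WellFoundedLT ι] {P : AffineSubspace K (ι → K)}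
    (hP : ∀ x ∈ P, ∀ ⦃i j⦄, i ≤ j → x i = 0 → x j = 0) :
    finrank K P.direction ≤ 1 := by
  by_cases hsupp : ∃ k, ∃ v ∈ P.direction, v k ≠ 0
  swap
  · push Not at hsupp
    rw [(Submodule.eq_bot_iff _).2 fun v hv ↦ funext fun k ↦ hsupp k v hv, finrank_bot]
    exact zero_le_one
  obtain ⟨k, ⟨v, hv, hvk⟩, hkmin⟩ := wellFounded_lt.has_min _ hsupp
  obtain ⟨p, hp⟩ : (P : Set (ι → K)).Nonempty := by
    rw [nonempty_iff_ne_bot]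
    rintro rfl
    simp_all
  -- `q` vanishes at `k` and beyond, and so does `w +ᵥ q` for a direction vector `w` vanishing at
  -- `k`; before `k`, `w` vanishes by minimality of `k`.
  set q := (-(p k / v k)) • v +ᵥ p
  have hq : q ∈ P := vadd_mem_of_mem_direction (Submodule.smul_mem _ _ hv) hp
  have hqk : q k = 0 := by simp [q, hvk]
  have hinj : Function.Injective (LinearMap.proj k ∘ₗ P.direction.subtype) := by
    rw [← LinearMap.ker_eq_bot, eq_bot_iff]
    rintro ⟨w, hw⟩ hwk
    replace hwk : w k = 0 := hwk
    rw [Submodule.mem_bot, Submodule.mk_eq_zero]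
    funext j
    rcases lt_or_ge j k with hj | hj
    · by_contra h
      exact hkmin j ⟨w, hw, h⟩ hj
    · have hwq := hP _ (vadd_mem_of_mem_direction hw hq) hj (by simp [hwk, hqk])
      simpa [hP q hq hj hqk] using hwq
  simpa using LinearMap.finrank_le_finrank_of_injective hinj

theorem RowEchelon.isRowEchelon {K : Type*} [Field K] {m n : ℕ} {A : Matrix (Fin m) (Fin n) K}
    (h : RowEchelon A) : A.IsRowEchelon := fun i₁ i₂ hlt j₂ hz ↦ by
  by_contra hne
  obtain ⟨j', hj', hne'⟩ := h i₁ i₂ hlt j₂ hne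
  exact hne' (hz j' hj')

namespace Matrix

theorem IsRowEchelon.exists_isPivotedBy {m n R : Type*} [Zero R] [LinearOrder m] [LinearOrder n]
    [WellFoundedLT n] {A : Matrix m n R} (hA : A.IsRowEchelon) : ∃ l, A.IsPivotedBy l := by
  classical
  refine ⟨fun i ↦ if h : A i = 0 then ⊤ else
    (row_ne_zero_iff_exists_isLeadingEntry.1 h).choose, hA, fun i ↦ ?_⟩
  split_ifs with h
  · simp [h]
  · have hc := (row_ne_zero_iff_exists_isLeadingEntry.1 h).choose_spec
    refine ⟨fun j hj ↦ hc.1 j (WithTop.coe_lt_coe.1 hj), fun c hc' ↦ ?_⟩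
    rw [← WithTop.coe_inj.1 hc']
    exact hc.2

variable {R : Type*} {m n : ℕ}

theorem IsRowEchelon.lt_rank_of_row_ne_zero [CommRing R] [IsDomain R]
    {A : Matrix (Fin m) (Fin n) R} (hA : A.IsRowEchelon) {i : Fin m} (hi : A i ≠ 0) :
    (i : ℕ) < A.rank := by
  classical
  obtain ⟨l, hl⟩ := hA.exists_isPivotedBy
  rw [hl.rank_eq, Nat.lt_iff_add_one_le, ← Fin.card_Iic]
  refine card_le_card fun i' hi' ↦ mem_filter.2 ⟨mem_univ _, fun htop ↦ hi ?_⟩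
  rcases (mem_Iic.1 hi').lt_or_eq with hlt | rfl
  · exact hA.row_eq_zero_of_lt hlt (hl.eq_top_iff.1 htop)
  · exact hl.eq_top_iff.1 htop

theorem IsRowEchelon.apply_eq_zero_of_lt_add [Zero R] {A : Matrix (Fin m) (Fin n) R}
    (hA : A.IsRowEchelon) {i₀ i : Fin m} {t : ℕ} (hi : i₀ ≤ i)
    (h₀ : ∀ j : Fin n, (j : ℕ) < i₀ + t → A i₀ j = 0) :
    ∀ j : Fin n, (j : ℕ) < i + t → A i j = 0 := by
  obtain ⟨d, hd⟩ := Nat.exists_eq_add_of_le (Fin.le_def.1 hi)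
  induction d generalizing i with
  | zero => rwa [Fin.ext (hd.trans i₀.val.add_zero)]
  | succ d ih =>
    intro j hj
    have hprev : (⟨i₀ + d, by omega⟩ : Fin m) < i := Fin.lt_def.2 (by simp [hd])
    exact hA hprev fun j' hj' ↦
      ih (Fin.le_def.2 (by simp)) rfl j' (by rw [Fin.lt_def] at hj'; simp only; omega)

theorem IsRowEchelon.apply_eq_zero_of_lt [Zero R] {A : Matrix (Fin m) (Fin n) R}
    (hA : A.IsRowEchelon) {i : Fin m} {j : Fin n} (hji : (j : ℕ) < i) : A i j = 0 :=
  hA.apply_eq_zero_of_lt_add (i₀ := ⟨0, i.pos⟩) (t := 0) (Fin.le_def.2 i.val.zero_le)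
    (by simp) j hji

theorem IsRowEchelon.apply_diag_eq_zero [Zero R] {A : Matrix (Fin m) (Fin n) R}
    (hA : A.IsRowEchelon) {i₁ i₂ : Fin m} {j₁ j₂ : Fin n} (hj₁ : (j₁ : ℕ) = i₁)
    (hj₂ : (j₂ : ℕ) = i₂) (hi : i₁ ≤ i₂) (h : A i₁ j₁ = 0) : A i₂ j₂ = 0 := by
  refine hA.apply_eq_zero_of_lt_add (t := 1) hi (fun j hj ↦ ?_) j₂ (by omega)
  rcases (Nat.lt_succ_iff.1 hj).lt_or_eq with hlt | heq
  · exact hA.apply_eq_zero_of_lt hlt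
  · rwa [Fin.ext (heq.trans hj₁.symm)]

theorem IsRowEchelon.apply_eq_zero_of_rank_le [CommRing R] [IsDomain R]
    {A : Matrix (Fin m) (Fin n) R} (hA : A.IsRowEchelon) {r : ℕ} (hr : A.rank ≤ r) {i : Fin m}
    {j : Fin n} (hij : (j : ℕ) < i ∨ r ≤ i) : A i j = 0 := by
  rcases hij with hji | hri
  · exact hA.apply_eq_zero_of_lt hji
  · by_contra hne
    have := hA.lt_rank_of_row_ne_zero fun h0 ↦ hne (congrFun h0 j)
    omega

variable (K : Type*) [Field K] {m n r : ℕ} (hrm : r ≤ m) (hrn : r ≤ n)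

def cornerDiagLinearMap : Matrix (Fin m) (Fin n) K →ₗ[K] (Fin r → K) :=
  LinearMap.pi fun i ↦ entryLinearMap K K (Fin.castLE hrm i) (Fin.castLE hrn i)

def cornerUpperLinearMap :
    Matrix (Fin m) (Fin n) K →ₗ[K] ((i : Fin r) × {j : Fin n // Fin.castLE hrn i < j} → K) :=
  LinearMap.pi fun e ↦ entryLinearMap K K (Fin.castLE hrm e.1) e.2

variable {K}

theorem eq_zero_of_cornerUpper_eq_zero {B : Matrix (Fin m) (Fin n) K}
    (hB : ∀ (i : Fin m) (j : Fin n), ((j : ℕ) < i ∨ r ≤ i) → B i j = 0)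
    (hu : cornerUpperLinearMap K hrm hrn B = 0) (hd : cornerDiagLinearMap K hrm hrn B = 0) :
    B = 0 := by
  funext i j
  by_cases hij : (j : ℕ) < i ∨ r ≤ i
  · exact hB i j hij
  push Not at hij
  obtain ⟨hij, hir⟩ := hij
  rcases hij.lt_or_eq with hlt | heq
  · simpa [cornerUpperLinearMap] using congrFun hu ⟨⟨i, hir⟩, j, Fin.lt_def.2 hlt⟩
  · have := congrFun hd ⟨i, hir⟩
    simp only [cornerDiagLinearMap, LinearMap.pi_apply, entryLinearMap_apply, Fin.castLE_mk,
      Fin.eta] at this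
    rwa [show (⟨i, _⟩ : Fin n) = j from Fin.ext heq] at this

theorem finrank_le_card_add_finrank_map_cornerDiag {V : Submodule K (Matrix (Fin m) (Fin n) K)}
    (hV : ∀ B ∈ V, ∀ (i : Fin m) (j : Fin n), ((j : ℕ) < i ∨ r ≤ i) → B i j = 0) :
    finrank K V ≤ Fintype.card ((i : Fin r) × {j : Fin n // Fin.castLE hrn i < j}) +
      finrank K (V.map (cornerDiagLinearMap K hrm hrn)) := by
  set D := cornerDiagLinearMap K hrm hrn
  have hinj : Function.Injective
      (((cornerUpperLinearMap K hrm hrn).domRestrict V).prod (D.submoduleMap V)) := by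
    rw [← LinearMap.ker_eq_bot, eq_bot_iff]
    rintro ⟨B, hB⟩ hker
    rw [Submodule.mem_bot, Submodule.mk_eq_zero]
    exact eq_zero_of_cornerUpper_eq_zero hrm hrn (hV B hB) (congrArg Prod.fst hker)
      (congrArg (Subtype.val ∘ Prod.snd) hker)
  simpa using LinearMap.finrank_le_finrank_of_injective hinj

end Matrix

theorem stmt11_general (K : Type*) [Field K] (m n r : ℕ)
    (hrm : r ≤ m) (hrn : r ≤ n)
    (S : AffineSubspace K (Matrix (Fin m) (Fin n) K))
    (hech : ∀ A ∈ S, RowEchelon A)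
    (hmax : IsGreatest {k : ℕ | ∃ A ∈ S, A.rank = k} r) :
    Module.finrank K S.direction ≤ r * n - r * (r + 1) / 2 + 1 := by
  have hech' (A) (hA : A ∈ S) : A.IsRowEchelon := (hech A hA).isRowEchelon
  have hsupp : ∀ B ∈ S.direction, ∀ (i : Fin m) (j : Fin n),
      ((j : ℕ) < i ∨ r ≤ i) → B i j = 0 :=
    fun B hB i j hij ↦ S.direction_le_ker (Matrix.entryLinearMap K K i j)
      (fun A hA ↦ (hech' A hA).apply_eq_zero_of_rank_le (hmax.2 ⟨A, hA, rfl⟩) hij) hB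
  have hdiag : finrank K (S.direction.map (Matrix.cornerDiagLinearMap K hrm hrn)) ≤ 1 := by
    rw [← (Matrix.cornerDiagLinearMap K hrm hrn).toAffineMap_linear,
      ← AffineSubspace.map_direction]
    refine AffineSubspace.finrank_direction_le_one_of_forall_eq_zero ?_
    rintro _ ⟨A, hA, rfl⟩ i₁ i₂ hi h
    exact (hech' A hA).apply_diag_eq_zero (by simp) (by simp)
      ((Fin.castLE_le_castLE_iff _).2 hi) h
  have := Matrix.finrank_le_card_add_finrank_map_cornerDiag hrm hrn hsupp
  have := Fintype.card_sigma_castLE_lt_add_triangle hrn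
  omega

theorem stmt11 (K : Type*) [Field K] (m n r s : ℕ)
    (hK : (r + 1 : Cardinal) ≤ Cardinal.mk K)
    (hsr : s < r) (hrm : r ≤ m) (hrn : r ≤ n)
    (S : AffineSubspace K (Matrix (Fin m) (Fin n) K))
    (hech : ∀ A ∈ S, RowEchelon A)
    (hmin : IsLeast {k : ℕ | ∃ A ∈ S, A.rank = k} s)
    (hmax : IsGreatest {k : ℕ | ∃ A ∈ S, A.rank = k} r) :
    Module.finrank K S.direction ≤ r * n - r * (r + 1) / 2 + 1 :=
  stmt11_general K m n r hrm hrn S hech hmax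
end

section
/- Over K = ℤ/3ℤ, the affine subspace S = {[[a, b, c],[0, a+1, d],[0, 0, a+2]] : a,b,c,d ∈ ℤ/3ℤ} of 3×3 matrices has dimension 4 and every element of S has rank exactly 2. In particular, for m=n=3 and r=s=2, the bound a^K(m×n; s, r) ≤ rn − s(s+1)/2 = 3 fails over ℤ/3ℤ. -/
open Matrix

noncomputable def phi13 : (Fin 4 → ZMod 3) →ₗ[ZMod 3] Matrix (Fin 3) (Fin 3) (ZMod 3) where
  toFun v := !![v 0, v 1, v 2; 0, v 0, v 3; 0, 0, v 0]
  map_add' u v := by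
    ext i j
    fin_cases i <;> fin_cases j <;> simp [Matrix.add_apply, Matrix.vecHead, Matrix.vecTail]
  map_smul' t v := by
    ext i j
    fin_cases i <;> fin_cases j <;> simp [Matrix.smul_apply, Matrix.vecHead, Matrix.vecTail]

lemma rank_le_two13 (A : Matrix (Fin 3) (Fin 3) (ZMod 3)) (h : A.det = 0) : A.rank ≤ 2 := by
  obtain ⟨v, hv, hAv⟩ := (Matrix.exists_mulVec_eq_zero_iff).2 h
  have hk : 0 < Module.finrank (ZMod 3) (LinearMap.ker A.mulVecLin) := by
    have : Nontrivial (LinearMap.ker A.mulVecLin) :=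
      ⟨⟨⟨v, by simpa using hAv⟩, 0, by simpa [Subtype.ext_iff] using hv⟩⟩
    exact Module.finrank_pos
  have hrn := LinearMap.finrank_range_add_finrank_ker A.mulVecLin
  have hdom : Module.finrank (ZMod 3) (Fin 3 → ZMod 3) = 3 := by simp
  rw [hdom] at hrn
  rw [Matrix.rank]
  omega

lemma rank_ge_two13 (A : Matrix (Fin 3) (Fin 3) (ZMod 3)) (j1 j2 : Fin 3)
    (h : LinearIndependent (ZMod 3) ![Aᵀ j1, Aᵀ j2]) : 2 ≤ A.rank := by
  rw [Matrix.rank_eq_finrank_span_cols]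
  have hle : Submodule.span (ZMod 3) (Set.range ![Aᵀ j1, Aᵀ j2]) ≤
      Submodule.span (ZMod 3) (Set.range Aᵀ) := by
    apply Submodule.span_mono
    rintro x ⟨i, rfl⟩
    fin_cases i
    · exact ⟨j1, rfl⟩
    · exact ⟨j2, rfl⟩
  have h2 : Module.finrank (ZMod 3)
      (Submodule.span (ZMod 3) (Set.range ![Aᵀ j1, Aᵀ j2])) = 2 := by
    rw [finrank_span_eq_card h]; simp
  calc 2 = _ := h2.symm
    _ ≤ _ := Submodule.finrank_mono hle

theorem stmt13 :
    ∃ S : AffineSubspace (ZMod 3) (Matrix (Fin 3) (Fin 3) (ZMod 3)),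
      (S : Set (Matrix (Fin 3) (Fin 3) (ZMod 3))) =
        {A | ∃ a b c d : ZMod 3, A = !![a, b, c; 0, a + 1, d; 0, 0, a + 2]} ∧
      Module.finrank (ZMod 3) S.direction = 4 ∧
      (∀ A ∈ S, A.rank = 2) ∧
      2 * 3 - 2 * (2 + 1) / 2 < 4 := by
  refine ⟨AffineSubspace.mk' !![0,0,0;0,1,0;0,0,2] (LinearMap.range phi13), ?_, ?_, ?_, by norm_num⟩
  · ext A
    simp only [AffineSubspace.mem_coe, AffineSubspace.mem_mk', LinearMap.mem_range,
      Set.mem_setOf_eq, vsub_eq_sub]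
    constructor
    · rintro ⟨v, hv⟩
      refine ⟨v 0, v 1, v 2, v 3, ?_⟩
      have : A = phi13 v + !![0,0,0;0,1,0;0,0,2] := by rw [hv]; abel
      rw [this]
      ext i j
      fin_cases i <;> fin_cases j <;> simp [phi13, Matrix.add_apply, Matrix.vecHead, Matrix.vecTail]
    · rintro ⟨a, b, c, d, rfl⟩
      refine ⟨![a, b, c, d], ?_⟩
      ext i j
      fin_cases i <;> fin_cases j <;> simp [phi13, Matrix.sub_apply, Matrix.vecHead, Matrix.vecTail]
  · rw [AffineSubspace.direction_mk']
    have hinj : Function.Injective phi13 := by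
      intro u v h
      funext i
      fin_cases i
      · simpa [phi13, Matrix.vecHead, Matrix.vecTail] using congrFun (congrFun (h) 0) 0
      · simpa [phi13, Matrix.vecHead, Matrix.vecTail] using congrFun (congrFun (h) 0) 1
      · simpa [phi13, Matrix.vecHead, Matrix.vecTail] using congrFun (congrFun (h) 0) 2
      · simpa [phi13, Matrix.vecHead, Matrix.vecTail] using congrFun (congrFun (h) 1) 2
    rw [LinearMap.finrank_range_of_inj hinj]
    simp
  · intro A hA
    rw [AffineSubspace.mem_mk'] at hA
    obtain ⟨v, hv⟩ := hA
    have hA : A = !![v 0, v 1, v 2; 0, v 0 + 1, v 3; 0, 0, v 0 + 2] := by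
      rw [vsub_eq_sub] at hv
      have : A = phi13 v + !![0,0,0;0,1,0;0,0,2] := by
        rw [hv]; abel
      rw [this]
      ext i j
      fin_cases i <;> fin_cases j <;> simp [phi13, Matrix.add_apply, Matrix.vecHead, Matrix.vecTail]
    obtain ⟨a, b, c, d, rfl⟩ : ∃ a b c d : ZMod 3,
        A = !![a, b, c; 0, a + 1, d; 0, 0, a + 2] := ⟨v 0, v 1, v 2, v 3, hA⟩
    clear hv hA
    have ha : ∀ x : ZMod 3, x = 0 ∨ x = 1 ∨ x = 2 := by decide
    have hdet : (!![a, b, c; 0, a + 1, d; 0, 0, a + 2] : Matrix _ _ (ZMod 3)).det = 0 := by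
      rcases ha a with rfl | rfl | rfl <;>
        simp [Matrix.det_fin_three, Matrix.vecHead, Matrix.vecTail] <;> ring_nf <;> decide
    refine le_antisymm (rank_le_two13 _ hdet) ?_
    rcases ha a with rfl | rfl | rfl
    · apply rank_ge_two13 _ 1 2
      rw [linearIndependent_fin2]
      refine ⟨fun h => ?_, fun t h => ?_⟩
      · have h2 := congrFun h 2
        simp [Matrix.vecHead, Matrix.vecTail] at h2
        exact absurd h2 (by decide)
      · have h2 := congrFun h 2
        simp [Matrix.vecHead, Matrix.vecTail] at h2
        rcases h2 with rfl | h2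
        · have h1 := congrFun h 1
          simp [Matrix.vecHead, Matrix.vecTail] at h1
        · exact absurd h2 (by decide)
    · apply rank_ge_two13 _ 0 1
      rw [linearIndependent_fin2]
      refine ⟨fun h => ?_, fun t h => ?_⟩
      · have h1 := congrFun h 1
        simp [Matrix.vecHead, Matrix.vecTail] at h1
        exact absurd h1 (by decide)
      · have h1 := congrFun h 1
        simp [Matrix.vecHead, Matrix.vecTail] at h1
        rcases h1 with rfl | h1
        · have h0 := congrFun h 0
          simp [Matrix.vecHead, Matrix.vecTail] at h0
        · exact absurd h1 (by decide)
    · apply rank_ge_two13 _ 2 0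
      rw [linearIndependent_fin2]
      refine ⟨fun h => ?_, fun t h => ?_⟩
      · have h0 := congrFun h 0
        simp [Matrix.vecHead, Matrix.vecTail] at h0
        exact absurd h0 (by decide)
      · have h2 := congrFun h 2
        simp [Matrix.vecHead, Matrix.vecTail] at h2
        exact absurd h2 (by decide)
end

section
/- Let K be a field of characteristic ≠ 2 and s ≤ r ≤ m ≤ n. Then every affine subspace S of K^{m×n} with min{rk(A): A∈S} = s and max{rk(A): A∈S} = r satisfies dim S ≤ mn − (m−r)·r. -/
/-!
Take `f ∈ S` of maximal rank `r` and split `V₁ = ker f ⊕ s(range f)` (with `s` a section of `f`)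
and `V₂ = range f ⊕ Z`. For `g` in the direction of `S` whose diagonal blocks vanish,
`f + g = [[1, B], [C, 0]]`, and `rank (f + g) ≤ r` forces the Schur complement `C B` to vanish.
A linear space of pairs `(C, B)` with `C B = 0` has dimension at most `r (n - r)` once
`m - r ≤ n - r`: the `B` take values in the span `Δ` of all their images, and a `C` paired with
`B = 0` must kill `Δ`. Adding the `r² + (n - r)(m - r)` dimensions of the diagonal blocks gives
`m n - (m - r) r`.
-/

open Module LinearMap

section

variable {K X Y Z : Type*} [Field K] [AddCommGroup X] [Module K X] [AddCommGroup Y] [Module K Y]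
  [AddCommGroup Z] [Module K Z] [FiniteDimensional K X] [FiniteDimensional K Y]
  [FiniteDimensional K Z]

theorem finrank_le_of_forall_comp_eq_zero (hZY : finrank K Z ≤ finrank K Y)
    (U : Submodule K ((X →ₗ[K] Z) × (Y →ₗ[K] X))) (hU : ∀ p ∈ U, p.1 ∘ₗ p.2 = 0) :
    finrank K U ≤ finrank K X * finrank K Y := by
  have hpolar : ∀ p ∈ U, p.2 = 0 → ∀ q ∈ U, p.1 ∘ₗ q.2 = 0 := by
    intro p hp hp2 q hq
    simpa [hp2, comp_add, add_comp, hU q hq] using hU (p + q) (U.add_mem hp hq)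
  set Δ : Submodule K X := ⨆ q : U, range q.val.2
  obtain ⟨Δ', hΔ⟩ := Δ.exists_isCompl
  let Φ : U →ₗ[K] (Δ' →ₗ[K] Z) × (Y →ₗ[K] Δ) :=
    { toFun p := (p.val.1 ∘ₗ Δ'.subtype, Δ.projectionOnto Δ' hΔ ∘ₗ p.val.2)
      map_add' _ _ := by ext <;> simp
      map_smul' _ _ := by ext <;> simp }
  have hΦ : Function.Injective Φ := by
    rw [← ker_eq_bot, Submodule.eq_bot_iff]
    rintro ⟨p, hp⟩ hΦp
    obtain ⟨h1Δ', h2Δ⟩ : p.1 ∘ₗ Δ'.subtype = 0 ∧ Δ.projectionOnto Δ' hΔ ∘ₗ p.2 = 0 :=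
      Prod.mk_eq_zero.1 hΦp
    have h2 : p.2 = 0 := by
      ext y
      have hyΔ : p.2 y ∈ Δ := le_iSup (fun q : U => range q.val.2) ⟨p, hp⟩ ⟨y, rfl⟩
      have := congr($h2Δ y)
      rw [comp_apply, Submodule.projectionOnto_apply_of_mem_left hΔ hyΔ] at this
      simpa using congr(($this : X))
    have h1Δ : p.1 ∘ₗ Δ.subtype = 0 := by
      rw [← range_le_ker_iff, Submodule.range_subtype]
      exact iSup_le fun q => range_le_ker_iff.2 (hpolar p hp h2 q q.2)
    have h1 : p.1 = 0 :=
      (ofIsCompl_eq' hΔ h1Δ.symm h1Δ'.symm).symm.trans (ofIsCompl_zero hΔ)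
    ext1
    exact Prod.ext h1 h2
  calc finrank K U ≤ finrank K Δ' * finrank K Z + finrank K Y * finrank K Δ := by
        simpa [finrank_prod, finrank_linearMap] using finrank_le_finrank_of_injective hΦ
    _ ≤ finrank K Δ' * finrank K Y + finrank K Y * finrank K Δ := by gcongr
    _ = finrank K X * finrank K Y := by
        rw [← Submodule.finrank_add_eq_of_isCompl hΔ]; ring

end

theorem disjoint_ker_range_of_comp_comp_eq_id {K V₁ V₂ R : Type*} [Field K] [AddCommGroup V₁]
    [Module K V₁] [AddCommGroup V₂] [Module K V₂] [AddCommGroup R] [Module K R]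
    [FiniteDimensional K V₂] (h : V₁ →ₗ[K] V₂) (p : V₂ →ₗ[K] R)
    (s : R →ₗ[K] V₁) (hps : p ∘ₗ h ∘ₗ s = LinearMap.id)
    (hrk : finrank K (range h) ≤ finrank K R) : Disjoint (ker p) (range h) := by
  have hleft : Function.LeftInverse p (h ∘ₗ s) := LinearMap.congr_fun hps
  have hrange : range (h ∘ₗ s) = range h :=
    Submodule.eq_of_le_of_finrank_le (range_comp_le_range s h)
      (hrk.trans_eq (finrank_range_of_inj hleft.injective).symm)
  rw [← hrange, Submodule.disjoint_def]
  rintro _ hpw ⟨v, rfl⟩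
  rw [mem_ker, hleft v] at hpw
  simp [hpw]

@[simps]
def LinearMap.sandwich {K V₁ V₂ W₁ W₂ : Type*} [CommSemiring K] [AddCommMonoid V₁]
    [Module K V₁] [AddCommMonoid V₂] [Module K V₂] [AddCommMonoid W₁] [Module K W₁]
    [AddCommMonoid W₂] [Module K W₂] (a : V₂ →ₗ[K] W₂) (b : W₁ →ₗ[K] V₁) :
    (V₁ →ₗ[K] V₂) →ₗ[K] (W₁ →ₗ[K] W₂) where
  toFun g := a ∘ₗ g ∘ₗ b
  map_add' _ _ := by rw [add_comp, comp_add]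
  map_smul' _ _ := by rw [smul_comp, comp_smul]; rfl

section

variable {K V₁ V₂ : Type*} [Field K] [AddCommGroup V₁] [Module K V₁] [AddCommGroup V₂]
  [Module K V₂] {f : V₁ →ₗ[K] V₂} {Z : Submodule K V₂}

/-- For `V₁ = ker f ⊕ range s` and `V₂ = range f ⊕ Z`, the `range s → range f` block of `g`
(read through `s`) and its `ker f → Z` block; for `g = f` they are `1` and `0`. -/
noncomputable def diagBlocks (hZ : IsCompl (range f) Z) (s : range f →ₗ[K] V₁) :
    (V₁ →ₗ[K] V₂) →ₗ[K] (range f →ₗ[K] range f) × (ker f →ₗ[K] Z) :=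
  (sandwich ((range f).projectionOnto Z hZ) s).prod
    (sandwich (Z.projectionOnto (range f) hZ.symm) (ker f).subtype)

noncomputable def offDiagBlocks (hZ : IsCompl (range f) Z) (s : range f →ₗ[K] V₁) :
    (V₁ →ₗ[K] V₂) →ₗ[K] (range f →ₗ[K] Z) × (ker f →ₗ[K] range f) :=
  (sandwich (Z.projectionOnto (range f) hZ.symm) s).prod
    (sandwich ((range f).projectionOnto Z hZ) (ker f).subtype)

variable {hZ : IsCompl (range f) Z} {s : range f →ₗ[K] V₁} {g : V₁ →ₗ[K] V₂}

theorem mem_ker_diagBlocks :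
    g ∈ ker (diagBlocks hZ s) ↔ (∀ v, g (s v) ∈ Z) ∧ ∀ y ∈ ker f, g y ∈ range f := by
  simp [diagBlocks, LinearMap.ext_iff, Submodule.projectionOnto_apply_eq_zero_iff]

theorem mem_ker_offDiagBlocks :
    g ∈ ker (offDiagBlocks hZ s) ↔ (∀ v, g (s v) ∈ range f) ∧ ∀ y ∈ ker f, g y ∈ Z := by
  simp [offDiagBlocks, LinearMap.ext_iff, Submodule.projectionOnto_apply_eq_zero_iff]

variable (hs : ∀ v, f (s v) = v)
include hs

theorem disjoint_ker_diagBlocks_ker_offDiagBlocks :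
    Disjoint (ker (diagBlocks hZ s)) (ker (offDiagBlocks hZ s)) := by
  rw [Submodule.disjoint_def]
  intro g hd he
  rw [mem_ker_diagBlocks] at hd
  rw [mem_ker_offDiagBlocks] at he
  have hRZ := Submodule.disjoint_def.1 hZ.disjoint
  ext x
  have hx : x - s (f.rangeRestrict x) ∈ ker f := by simp [hs]
  calc g x = g (x - s (f.rangeRestrict x)) + g (s (f.rangeRestrict x)) := by simp
    _ = 0 := by
      rw [hRZ _ (hd.2 _ hx) (he.2 _ hx), hRZ _ (he.1 _) (hd.1 _), add_zero]

theorem offDiagBlocks_comp_eq_zero [FiniteDimensional K V₂]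
    (hg : g ∈ ker (diagBlocks hZ s)) (hrk : finrank K (range (f + g)) ≤ finrank K (range f)) :
    (offDiagBlocks hZ s g).1 ∘ₗ (offDiagBlocks hZ s g).2 = 0 := by
  set πR := (range f).projectionOnto Z hZ
  obtain ⟨hgs, hgN⟩ := mem_ker_diagBlocks.1 hg
  have hdisj : Disjoint (ker πR) (range (f + g)) := by
    refine disjoint_ker_range_of_comp_comp_eq_id (f + g) πR s ?_ hrk
    ext v
    simp [hs, πR, (Submodule.projectionOnto_apply_eq_zero_iff hZ).2 (hgs v)]
  ext y
  set u : range f := ⟨g y, hgN y y.2⟩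
  have hu : πR (g y) = u := Submodule.projectionOnto_apply_of_mem_left hZ _
  have hgsu : g (s u) = 0 := by
    have hrange : (f + g) (y - s u) = -g (s u) := by
      simp only [LinearMap.add_apply, map_sub, hs, mem_ker.1 y.2, u]
      abel
    have hker : -g (s u) ∈ ker πR := by
      rw [mem_ker, map_neg, (Submodule.projectionOnto_apply_eq_zero_iff hZ).2 (hgs u), neg_zero]
    exact neg_eq_zero.1 (Submodule.disjoint_def.1 hdisj _ hker ⟨_, hrange⟩)
  change (Z.projectionOnto (range f) hZ.symm (g (s (πR (g y)))) : V₂) = 0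
  rw [hu, hgsu, map_zero, Submodule.coe_zero]

end

theorem finrank_eq_finrank_map_add_finrank_map_inf_ker {K M P Q : Type*} [Field K]
    [AddCommGroup M] [Module K M] [AddCommGroup P] [Module K P] [AddCommGroup Q] [Module K Q]
    [FiniteDimensional K M] (W : Submodule K M) (d : M →ₗ[K] P) (e : M →ₗ[K] Q)
    (hde : Disjoint (ker d) (ker e)) :
    finrank K W = finrank K (W.map d) + finrank K ((W ⊓ ker d).map e) := by
  have hW := finrank_range_add_finrank_ker (d.domRestrict W)
  rw [range_domRestrict, ker_domRestrict] at hW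
  have hker : finrank K ((ker d).comap W.subtype) = finrank K ↥(W ⊓ ker d) := by
    rw [← Submodule.map_comap_subtype, Submodule.finrank_map_subtype_eq]
  have he : finrank K ((W ⊓ ker d).map e) = finrank K ↥(W ⊓ ker d) := by
    rw [← range_domRestrict]
    exact finrank_range_of_inj (injective_domRestrict_iff.2 (hde.mono_left inf_le_right))
  omega

theorem finrank_le_of_forall_finrank_range_add_le {K V₁ V₂ : Type*} [Field K] [AddCommGroup V₁]
    [Module K V₁] [AddCommGroup V₂] [Module K V₂] [FiniteDimensional K V₁]
    [FiniteDimensional K V₂] (f : V₁ →ₗ[K] V₂) (hdim : finrank K V₂ ≤ finrank K V₁)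
    (W : Submodule K (V₁ →ₗ[K] V₂))
    (hW : ∀ g ∈ W, finrank K (range (f + g)) ≤ finrank K (range f)) :
    finrank K W ≤ finrank K V₁ * finrank K V₂ -
      (finrank K V₂ - finrank K (range f)) * finrank K (range f) := by
  obtain ⟨Z, hZ⟩ := (range f).exists_isCompl
  obtain ⟨s, hfs⟩ := f.rangeRestrict.exists_rightInverse_of_surjective f.range_rangeRestrict
  have hs : ∀ v, f (s v) = v := fun v => congr(($(LinearMap.congr_fun hfs v) : V₂))
  have hU : ∀ p ∈ (W ⊓ ker (diagBlocks hZ s)).map (offDiagBlocks hZ s),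
      p.1 ∘ₗ p.2 = 0 := by
    rintro _ ⟨g, ⟨hgW, hg⟩, rfl⟩
    exact offDiagBlocks_comp_eq_zero hs hg (hW g hgW)
  have hrank := finrank_range_add_finrank_ker f
  have hZdim := Submodule.finrank_add_eq_of_isCompl hZ
  have hoff := finrank_le_of_forall_comp_eq_zero (by omega) _ hU
  have hdiag := Submodule.finrank_le (W.map (diagBlocks hZ s))
  rw [finrank_prod, finrank_linearMap, finrank_linearMap] at hdiag
  rw [finrank_eq_finrank_map_add_finrank_map_inf_ker W (diagBlocks hZ s) (offDiagBlocks hZ s)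
    (disjoint_ker_diagBlocks_ker_offDiagBlocks hs), ← hrank, ← hZdim, Nat.add_sub_cancel_left]
  refine Nat.le_sub_of_add_le ?_
  linarith

theorem stmt15_general (K : Type*) [Field K] (m n r : ℕ) (hmn : m ≤ n)
    (S : AffineSubspace K (Matrix (Fin m) (Fin n) K))
    (hmax : IsGreatest {k : ℕ | ∃ A ∈ S, A.rank = k} r) :
    Module.finrank K S.direction ≤ m * n - (m - r) * r := by
  obtain ⟨⟨A, hAS, rfl⟩, hle⟩ := hmax
  have hrank : ∀ B : Matrix (Fin m) (Fin n) K, finrank K (range (Matrix.toLin' B)) = B.rank :=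
    fun B => by rw [Matrix.toLin'_apply']; rfl
  have hW : ∀ g ∈ S.direction.map (Matrix.toLin' : _ ≃ₗ[K] _).toLinearMap,
      finrank K (range (Matrix.toLin' A + g)) ≤ finrank K (range (Matrix.toLin' A)) := by
    rintro _ ⟨B, hB, rfl⟩
    rw [hrank, LinearEquiv.coe_coe, ← map_add, hrank, add_comm]
    exact hle ⟨B + A, AffineSubspace.vadd_mem_of_mem_direction hB hAS, rfl⟩
  have key := finrank_le_of_forall_finrank_range_add_le (Matrix.toLin' A) (by simpa) _ hW
  rwa [LinearEquiv.finrank_map_eq, hrank, finrank_fin_fun, finrank_fin_fun, mul_comm] at key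

theorem stmt15 (K : Type*) [Field K] (hchar : ringChar K ≠ 2) (m n r s : ℕ)
    (hsr : s ≤ r) (hrm : r ≤ m) (hmn : m ≤ n)
    (S : AffineSubspace K (Matrix (Fin m) (Fin n) K))
    (hmin : IsLeast {k : ℕ | ∃ A ∈ S, A.rank = k} s)
    (hmax : IsGreatest {k : ℕ | ∃ A ∈ S, A.rank = k} r) :
    Module.finrank K S.direction ≤ m * n - (m - r) * r :=
  stmt15_general K m n r hmn S hmax
end

section
/- Let K be a field of characteristic ≠ 2, r ≤ m ≤ n, and let V ⊆ K^{m×n} be a linear subspace such that every matrix in V has the form [[0_{r×r}, B],[C, 0]] (top-left r×r block and bottom-right (m−r)×(n−r) block both zero), and such that C_{(i)} B^{(j)} = 0 for all v=[[0,B],[C,0]] ∈ V, all rows i of C and all columns j of B with j ≤ m−r. Then dim V ≤ (n−r)·r. -/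
open Module

/-- Abstract lemma: if `b : V → E` and `c : V → E*` are linear maps with
`(b, c)` jointly injective and `c v (b w) + c w (b v) = 0` for all `v, w`,
then `dim V ≤ dim E`. -/
lemma stmt16_aux {K V E : Type*} [Field K] [AddCommGroup V] [Module K V]
    [AddCommGroup E] [Module K E] [FiniteDimensional K V] [FiniteDimensional K E]
    (b : V →ₗ[K] E) (c : V →ₗ[K] Module.Dual K E)
    (hinj : ∀ v : V, b v = 0 → c v = 0 → v = 0)
    (hso : ∀ v w : V, c v (b w) + c w (b v) = 0) :
    Module.finrank K V ≤ Module.finrank K E := by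
  classical
  set P := LinearMap.range b with hP
  have hmem : ∀ x : LinearMap.ker b, c x.1 ∈ P.dualAnnihilator := by
    rintro ⟨x, hx⟩
    rw [Submodule.mem_dualAnnihilator]
    rintro w ⟨u, rfl⟩
    have h := hso x u
    have hx0 : b x = 0 := hx
    rw [hx0, map_zero] at h
    simpa using h
  let φ : LinearMap.ker b →ₗ[K] P.dualAnnihilator :=
    LinearMap.codRestrict _ (c.comp (LinearMap.ker b).subtype) hmem
  have hφinj : Function.Injective φ := by
    intro x y hxy
    have hc0 : c x.1 = c y.1 := congrArg Subtype.val hxy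
    have hbx : b x.1 = 0 := x.2
    have hby : b y.1 = 0 := y.2
    have hb : b (x.1 - y.1) = 0 := by rw [map_sub, hbx, hby, sub_zero]
    have hcc : c (x.1 - y.1) = 0 := by rw [map_sub, hc0, sub_self]
    exact Subtype.ext (sub_eq_zero.mp (hinj _ hb hcc))
  have h1 : Module.finrank K (LinearMap.ker b) ≤ Module.finrank K P.dualAnnihilator :=
    LinearMap.finrank_le_finrank_of_injective hφinj
  have h2 : Module.finrank K (E ⧸ P) = Module.finrank K P.dualAnnihilator :=
    (Subspace.quotEquivAnnihilator P).finrank_eq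
  have h3 : Module.finrank K (E ⧸ P) + Module.finrank K P = Module.finrank K E :=
    Submodule.finrank_quotient_add_finrank P
  have h4 : Module.finrank K P + Module.finrank K (LinearMap.ker b) = Module.finrank K V :=
    LinearMap.finrank_range_add_finrank_ker b
  omega

theorem stmt16 (K : Type*) [Field K] (hchar : ringChar K ≠ 2) (m n r : ℕ)
    (hrm : r ≤ m) (hmn : m ≤ n)
    (V : Submodule K (Matrix (Fin m) (Fin n) K))
    (hblock1 : ∀ v ∈ V, ∀ (i : Fin m) (j : Fin n), (i : ℕ) < r → (j : ℕ) < r → v i j = 0)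
    (hblock2 : ∀ v ∈ V, ∀ (i : Fin m) (j : Fin n), r ≤ (i : ℕ) → r ≤ (j : ℕ) → v i j = 0)
    (hiso : ∀ v ∈ V, ∀ (i : Fin m) (j : Fin n), r ≤ (i : ℕ) → r ≤ (j : ℕ) → (j : ℕ) < m →
      ∑ l : Fin r, v i ⟨(l : ℕ), by have := l.isLt; omega⟩ *
        v ⟨(l : ℕ), by have := l.isLt; omega⟩ j = 0) :
    Module.finrank K V ≤ (n - r) * r := by
  classical
  -- The "B"-map: extract the top-right block.
  let b : V →ₗ[K] (Fin r × Fin (n - r) → K) :=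
    { toFun := fun v p => (v : Matrix (Fin m) (Fin n) K)
        ⟨p.1, by have := p.1.isLt; omega⟩ ⟨r + p.2, by have := p.2.isLt; omega⟩
      map_add' := fun v w => rfl
      map_smul' := fun a v => rfl }
  -- The "C"-map: extract the bottom-left block, pair it with the first `m - r`
  -- columns of the `B`-block in a trace-like fashion.
  let c : V →ₗ[K] Module.Dual K (Fin r × Fin (n - r) → K) :=
    { toFun := fun v =>
        { toFun := fun B => ∑ i : Fin (m - r), ∑ l : Fin r,
            (v : Matrix (Fin m) (Fin n) K)
              ⟨r + i, by have := i.isLt; omega⟩ ⟨l, by have := l.isLt; omega⟩ *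
              B (l, ⟨i, by have := i.isLt; omega⟩)
          map_add' := fun B B' => by
            simp only [Pi.add_apply, mul_add, Finset.sum_add_distrib]
          map_smul' := fun a B => by
            simp only [Pi.smul_apply, smul_eq_mul, RingHom.id_apply, Finset.mul_sum]
            exact Finset.sum_congr rfl fun i _ => Finset.sum_congr rfl fun l _ => by ring }
      map_add' := fun v w => by
        refine LinearMap.ext fun B => ?_
        simp only [Submodule.coe_add, Matrix.add_apply, LinearMap.coe_mk, AddHom.coe_mk,
          LinearMap.add_apply, add_mul, Finset.sum_add_distrib]
      map_smul' := fun a v => by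
        refine LinearMap.ext fun B => ?_
        simp only [SetLike.val_smul, Matrix.smul_apply, smul_eq_mul, RingHom.id_apply,
          LinearMap.coe_mk, AddHom.coe_mk, LinearMap.smul_apply, Pi.smul_apply, Finset.mul_sum]
        exact Finset.sum_congr rfl fun i _ => Finset.sum_congr rfl fun l _ => by ring }
  have hso : ∀ v w : V, c v (b w) + c w (b v) = 0 := by
    intro v w
    show (∑ i : Fin (m - r), ∑ l : Fin r,
        (v : Matrix (Fin m) (Fin n) K)
          ⟨r + i, by have := i.isLt; omega⟩ ⟨l, by have := l.isLt; omega⟩ *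
        (w : Matrix (Fin m) (Fin n) K)
          ⟨l, by have := l.isLt; omega⟩ ⟨r + i, by have := i.isLt; omega⟩) +
      (∑ i : Fin (m - r), ∑ l : Fin r,
        (w : Matrix (Fin m) (Fin n) K)
          ⟨r + i, by have := i.isLt; omega⟩ ⟨l, by have := l.isLt; omega⟩ *
        (v : Matrix (Fin m) (Fin n) K)
          ⟨l, by have := l.isLt; omega⟩ ⟨r + i, by have := i.isLt; omega⟩) = 0
    rw [← Finset.sum_add_distrib]
    refine Finset.sum_eq_zero fun i _ => ?_
    have hv : ∑ l : Fin r,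
        (v : Matrix (Fin m) (Fin n) K)
          ⟨r + i, by have := i.isLt; omega⟩ ⟨l, by have := l.isLt; omega⟩ *
        (v : Matrix (Fin m) (Fin n) K)
          ⟨l, by have := l.isLt; omega⟩ ⟨r + i, by have := i.isLt; omega⟩ = 0 :=
      hiso v v.2
        ⟨r + i, by have := i.isLt; omega⟩ ⟨r + i, by have := i.isLt; omega⟩
        (by simp) (by simp) (by have := i.isLt; simp; omega)
    have hw : ∑ l : Fin r,
        (w : Matrix (Fin m) (Fin n) K)
          ⟨r + i, by have := i.isLt; omega⟩ ⟨l, by have := l.isLt; omega⟩ *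
        (w : Matrix (Fin m) (Fin n) K)
          ⟨l, by have := l.isLt; omega⟩ ⟨r + i, by have := i.isLt; omega⟩ = 0 :=
      hiso w w.2
        ⟨r + i, by have := i.isLt; omega⟩ ⟨r + i, by have := i.isLt; omega⟩
        (by simp) (by simp) (by have := i.isLt; simp; omega)
    have hvw : ∑ l : Fin r,
        ((v : Matrix (Fin m) (Fin n) K)
          ⟨r + i, by have := i.isLt; omega⟩ ⟨l, by have := l.isLt; omega⟩ +
         (w : Matrix (Fin m) (Fin n) K)
          ⟨r + i, by have := i.isLt; omega⟩ ⟨l, by have := l.isLt; omega⟩) *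
        ((v : Matrix (Fin m) (Fin n) K)
          ⟨l, by have := l.isLt; omega⟩ ⟨r + i, by have := i.isLt; omega⟩ +
         (w : Matrix (Fin m) (Fin n) K)
          ⟨l, by have := l.isLt; omega⟩ ⟨r + i, by have := i.isLt; omega⟩) = 0 :=
      hiso ((v : Matrix (Fin m) (Fin n) K) + w) (V.add_mem v.2 w.2)
        ⟨r + i, by have := i.isLt; omega⟩ ⟨r + i, by have := i.isLt; omega⟩
        (by simp) (by simp) (by have := i.isLt; simp; omega)
    simp only [add_mul, mul_add, Finset.sum_add_distrib] at hvw
    linear_combination hvw - hv - hw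
  have hinj : ∀ v : V, b v = 0 → c v = 0 → v = 0 := by
    intro v hb hc
    ext i j
    show (v : Matrix (Fin m) (Fin n) K) i j = 0
    rcases lt_or_ge (i : ℕ) r with hi | hi
    · rcases lt_or_ge (j : ℕ) r with hj | hj
      · exact hblock1 v v.2 i j hi hj
      · -- top-right block: use b v = 0
        have h := congrFun hb (⟨(i : ℕ), hi⟩, ⟨(j : ℕ) - r, by have := j.isLt; omega⟩)
        have e1 : (⟨(i : ℕ), by have := i.isLt; omega⟩ : Fin m) = i := Fin.ext rfl
        have e2 : (⟨r + ((j : ℕ) - r), by have := j.isLt; omega⟩ : Fin n) = j :=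
          Fin.ext (by simp; omega)
        rw [← e1, ← e2]
        exact h
    · rcases lt_or_ge (j : ℕ) r with hj | hj
      · -- bottom-left block: use c v = 0 on an indicator function
        have hi' : (i : ℕ) - r < m - r := by have := i.isLt; omega
        have hi'' : (i : ℕ) - r < n - r := by have := i.isLt; omega
        set B : Fin r × Fin (n - r) → K :=
          fun p => if p = (⟨(j : ℕ), hj⟩, ⟨(i : ℕ) - r, hi''⟩) then 1 else 0 with hB
        have h0 : c v B = 0 := by rw [hc]; rfl
        have hval : c v B = (v : Matrix (Fin m) (Fin n) K)
            ⟨r + ((i : ℕ) - r), by have := i.isLt; omega⟩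
            ⟨(j : ℕ), by have := j.isLt; omega⟩ := by
          show (∑ i' : Fin (m - r), ∑ l : Fin r,
              (v : Matrix (Fin m) (Fin n) K)
                ⟨r + i', by have := i'.isLt; omega⟩ ⟨l, by have := l.isLt; omega⟩ *
                B (l, ⟨i', by have := i'.isLt; omega⟩)) = _
          rw [Finset.sum_eq_single (⟨(i : ℕ) - r, hi'⟩ : Fin (m - r))]
          · rw [Finset.sum_eq_single (⟨(j : ℕ), hj⟩ : Fin r)]
            · simp [hB]
            · intro l _ hl
              simp only [hB]
              split
              · next hEq => exact absurd (congrArg Prod.fst hEq) hl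
              · exact mul_zero _
            · intro h; exact absurd (Finset.mem_univ _) h
          · intro i' _ hi'ne
            refine Finset.sum_eq_zero fun l _ => ?_
            simp only [hB]
            split
            · next hEq =>
                have hsnd : (i' : ℕ) = (i : ℕ) - r :=
                  congrArg (fun p : Fin r × Fin (n - r) => (p.2 : ℕ)) hEq
                exact absurd (Fin.ext hsnd) hi'ne
            · exact mul_zero _
          · intro h; exact absurd (Finset.mem_univ _) h
        have e1 : (⟨r + ((i : ℕ) - r), by have := i.isLt; omega⟩ : Fin m) = i :=
          Fin.ext (by simp; omega)
        have e2 : (⟨(j : ℕ), by have := j.isLt; omega⟩ : Fin n) = j := Fin.ext rfl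
        rw [← e1, ← e2, ← hval]
        exact h0
      · exact hblock2 v v.2 i j hi hj
  have := stmt16_aux b c hinj hso
  calc Module.finrank K V ≤ Module.finrank K (Fin r × Fin (n - r) → K) := this
    _ = (n - r) * r := by
        rw [Module.finrank_fintype_fun_eq_card, Fintype.card_prod, Fintype.card_fin,
          Fintype.card_fin, Nat.mul_comm]
end

section
/- Let K be a field and let S be an affine subspace of K^{m×n} with direction V. Suppose H ∈ S has exactly r nonzero entries, located at positions (1,j_1),…,(r,j_r) with j_1 < j_2 < ⋯ < j_r, all elements of S are in row echelon form, and all elements of S have rank r. Let D be the r-dimensional space of matrices supported on {(1,j_1),…,(r,j_r)}. Then V ∩ D = {0}. -/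
theorem Matrix.rank_le_card_of_forall_ne_zero_mem {m n K : Type*} [Fintype n]
    [CommRing K] [StrongRankCondition K] (A : Matrix m n K) (s : Finset n)
    (hs : ∀ i j, A i j ≠ 0 → j ∈ s) : A.rank ≤ s.card := by
  classical
  have hcols : Submodule.span K (Set.range A.col) ≤ Submodule.span K ↑(s.image A.col) := by
    rw [Submodule.span_le]
    rintro _ ⟨j, rfl⟩
    by_cases hj : j ∈ s
    · exact Submodule.subset_span (Finset.mem_image_of_mem _ hj)
    · have hzero : A.col j = 0 := funext fun i => not_not.mp fun h => hj (hs i j h)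
      simp [hzero]
  calc A.rank = Module.finrank K (Submodule.span K (Set.range A.col)) :=
        A.rank_eq_finrank_span_cols
    _ ≤ (s.image A.col).card := (Submodule.finrank_mono hcols).trans (finrank_span_finset_le_card _)
    _ ≤ s.card := Finset.card_image_le

theorem stmt17_general (K : Type*) [Field K] (m n r : ℕ)
    (S : AffineSubspace K (Matrix (Fin m) (Fin n) K))
    (H : Matrix (Fin m) (Fin n) K) (hH : H ∈ S)
    (jcol : Fin r → Fin n)
    (hsupp : ∀ (i : Fin m) (j : Fin n),
      H i j ≠ 0 ↔ ∃ t : Fin r, (i : ℕ) = (t : ℕ) ∧ j = jcol t)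
    (hrank : ∀ A ∈ S, A.rank = r) :
    ∀ v ∈ S.direction,
      (∀ (i : Fin m) (j : Fin n), v i j ≠ 0 → ∃ t : Fin r, (i : ℕ) = (t : ℕ) ∧ j = jcol t) →
      v = 0 := by
  classical
  intro v hv hvsupp
  by_contra hv0
  obtain ⟨i, j, hij⟩ : ∃ i j, v i j ≠ 0 := by simpa [← Matrix.ext_iff] using hv0
  obtain ⟨t, hit, hjt⟩ := hvsupp i j hij
  set A := (-H i j / v i j) • v + H with hA
  have hAS : A ∈ S := AffineSubspace.vadd_mem_of_mem_direction (S.direction.smul_mem _ hv) hH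
  have hAij : A i j = 0 := by simp [hA, div_mul_cancel₀ _ hij]
  have hAsupp : ∀ i' j', A i' j' ≠ 0 → j' ∈ (Finset.univ.erase t).image jcol := by
    intro i' j' hA'
    obtain ⟨t', hit', hjt'⟩ : ∃ t' : Fin r, (i' : ℕ) = t' ∧ j' = jcol t' := by
      by_cases hv' : v i' j' = 0
      · exact (hsupp i' j').mp (by simpa [hA, hv'] using hA')
      · exact hvsupp i' j' hv'
    refine Finset.mem_image.mpr ⟨t', Finset.mem_erase.mpr ⟨fun htt => hA' ?_, Finset.mem_univ _⟩, hjt'.symm⟩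
    obtain rfl : i' = i := Fin.ext (by rw [hit', htt, hit])
    rwa [hjt', htt, ← hjt]
  have hcard : ((Finset.univ.erase t).image jcol).card < r :=
    calc _ ≤ (Finset.univ.erase t).card := Finset.card_image_le
      _ < Finset.univ.card := Finset.card_erase_lt_of_mem (Finset.mem_univ t)
      _ = r := Finset.card_fin r
  have hle := A.rank_le_card_of_forall_ne_zero_mem _ hAsupp
  rw [hrank A hAS] at hle
  omega

theorem stmt17 (K : Type*) [Field K] (m n r : ℕ) (hrm : r ≤ m)
    (S : AffineSubspace K (Matrix (Fin m) (Fin n) K))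
    (H : Matrix (Fin m) (Fin n) K) (hH : H ∈ S)
    (jcol : Fin r → Fin n) (hmono : StrictMono jcol)
    (hsupp : ∀ (i : Fin m) (j : Fin n),
      H i j ≠ 0 ↔ ∃ t : Fin r, (i : ℕ) = (t : ℕ) ∧ j = jcol t)
    (hech : ∀ A ∈ S, RowEchelon A)
    (hrank : ∀ A ∈ S, A.rank = r) :
    ∀ v ∈ S.direction,
      (∀ (i : Fin m) (j : Fin n), v i j ≠ 0 → ∃ t : Fin r, (i : ℕ) = (t : ℕ) ∧ j = jcol t) →
      v = 0 :=
  stmt17_general K m n r S H hH jcol hsupp hrank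
end

section
/- Let K be a field with |K| ≥ r+2 and characteristic ≠ 2, r even, and let γ = diag(d_1,d_1,…,d_{r/2},d_{r/2})·J̄_r with all d_l ≠ 0. Let G ∈ K_a^{n×n} have γ as its top-left r×r block and zeros elsewhere, and let V be a linear subspace of the antisymmetric n×n matrices such that every matrix in G + V has rank at most r. Then every v ∈ V satisfies v_{i,j} = 0 for all i > r and j > r. -/
open Matrix Polynomial

lemma aux_minor_det_zero {K : Type*} [Field K] {n m : ℕ} (M : Matrix (Fin n) (Fin n) K)
    (hM : M.rank ≤ m) (f g : Fin (m + 1) → Fin n) : (M.submatrix f g).det = 0 := by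
  by_contra h
  have hu : IsUnit (M.submatrix f g) :=
    (Matrix.isUnit_iff_isUnit_det _).2 (isUnit_iff_ne_zero.2 h)
  have hrk : (M.submatrix f g).rank = m + 1 := by
    simpa using Matrix.rank_of_isUnit _ hu
  have heq : M.submatrix f g =
      (Matrix.of fun (a : Fin (m+1)) (c : Fin n) => if c = f a then (1:K) else 0) * M *
      (Matrix.of fun (c : Fin n) (b : Fin (m+1)) => if c = g b then (1:K) else 0) := by
    ext a b
    simp [Matrix.mul_apply, ite_mul, mul_ite, Finset.sum_ite_eq, Finset.sum_ite_eq']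
  have hle : (M.submatrix f g).rank ≤ M.rank := by
    rw [heq]
    exact le_trans (Matrix.rank_mul_le_left _ _) (Matrix.rank_mul_le_right _ _)
  omega
open Matrix Polynomial

lemma aux_gamma_det_ne_zero {K : Type*} [Field K] {r : ℕ} (hr : r % 2 = 0)
    (d : Fin (r / 2) → K) (hd : ∀ l, d l ≠ 0)
    (γ : Matrix (Fin r) (Fin r) K)
    (hγ : ∀ i j : Fin r, γ i j =
      if h1 : (j : ℕ) = (i : ℕ) + 1 ∧ (i : ℕ) % 2 = 0 ∧ (j : ℕ) < r then
        d ⟨(i : ℕ) / 2, by omega⟩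
      else if h2 : (i : ℕ) = (j : ℕ) + 1 ∧ (j : ℕ) % 2 = 0 ∧ (i : ℕ) < r then
        -d ⟨(j : ℕ) / 2, by omega⟩
      else 0) : γ.det ≠ 0 := by
  have hv : ∀ a : Fin r, (if (a : ℕ) % 2 = 0 then (a : ℕ) + 1 else (a : ℕ) - 1) < r := by
    intro a; have := a.isLt; split_ifs with h <;> omega
  let π : Equiv.Perm (Fin r) := Function.Involutive.toPerm
    (fun a => ⟨if (a : ℕ) % 2 = 0 then (a : ℕ) + 1 else (a : ℕ) - 1, hv a⟩)
    (by intro a; apply Fin.ext; simp only; have := a.isLt; split_ifs <;> omega)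
  have hs : ∀ b : Fin r, (b : ℕ) / 2 < r / 2 := by intro b; have := b.isLt; omega
  let s : Fin r → K := fun b =>
    if (b : ℕ) % 2 = 0 then -d ⟨(b : ℕ) / 2, hs b⟩ else d ⟨(b : ℕ) / 2, hs b⟩
  have hfac : γ = (π.permMatrix K) * Matrix.diagonal s := by
    ext a b
    rw [Matrix.mul_diagonal, hγ]
    have hπ : π a = ⟨if (a : ℕ) % 2 = 0 then (a : ℕ) + 1 else (a : ℕ) - 1, hv a⟩ := rfl
    rw [Equiv.Perm.permMatrix, PEquiv.toMatrix_apply, Equiv.toPEquiv_apply, hπ]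
    have ha := a.isLt; have hb := b.isLt
    simp only [Option.mem_def, Option.some.injEq, Fin.ext_iff, Fin.val_mk, s]
    split_ifs
    all_goals try omega
    all_goals try (exfalso; omega)
    all_goals try (rw [zero_mul])
    all_goals try rfl
    all_goals rw [one_mul]
    all_goals try (congr 1; simp only [Fin.mk.injEq]; omega)
    all_goals (rw [neg_inj]; congr 1; simp only [Fin.mk.injEq]; omega)
  rw [hfac, Matrix.det_mul, Matrix.det_permutation, Matrix.det_diagonal]
  apply mul_ne_zero
  · rcases Int.units_eq_one_or (Equiv.Perm.sign π) with h | h <;> simp [h]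
  · rw [Finset.prod_ne_zero_iff]
    intro b _
    simp only [s]; split_ifs
    · exact neg_ne_zero.2 (hd _)
    · exact hd _

theorem stmt19 (K : Type*) [Field K] (n r : ℕ)
    (hK : (r + 2 : Cardinal) ≤ Cardinal.mk K) (hchar : ringChar K ≠ 2)
    (hr : r % 2 = 0) (hrn : r ≤ n)
    (d : Fin (r / 2) → K) (hd : ∀ l, d l ≠ 0)
    (G : Matrix (Fin n) (Fin n) K)
    (hG : ∀ i j : Fin n, G i j =
      if h1 : (j : ℕ) = (i : ℕ) + 1 ∧ (i : ℕ) % 2 = 0 ∧ (j : ℕ) < r then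
        d ⟨(i : ℕ) / 2, by omega⟩
      else if h2 : (i : ℕ) = (j : ℕ) + 1 ∧ (j : ℕ) % 2 = 0 ∧ (i : ℕ) < r then
        -d ⟨(j : ℕ) / 2, by omega⟩
      else 0)
    (V : Submodule K (Matrix (Fin n) (Fin n) K))
    (hanti : ∀ v ∈ V, vᵀ = -v)
    (hrank : ∀ v ∈ V, (G + v).rank ≤ r) :
    ∀ v ∈ V, ∀ i j : Fin n, r ≤ (i : ℕ) → r ≤ (j : ℕ) → v i j = 0 := by
  classical
  intro v hv i j hi hj
  have hG0 : ∀ a b : Fin n, r ≤ (a : ℕ) ∨ r ≤ (b : ℕ) → G a b = 0 := by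
    intro a b hab
    rw [hG, dif_neg (by omega), dif_neg (by omega)]
  set f : Fin (r + 1) → Fin n := fun k => if h : (k : ℕ) < r then ⟨k, by omega⟩ else i with hf
  set g : Fin (r + 1) → Fin n := fun k => if h : (k : ℕ) < r then ⟨k, by omega⟩ else j with hg
  have hfl : f (Fin.last r) = i := by
    rw [hf]; exact dif_neg (by simp)
  have hgl : g (Fin.last r) = j := by
    rw [hg]; exact dif_neg (by simp)
  set M : Matrix (Fin (r + 1)) (Fin (r + 1)) K[X] :=
    (X : K[X]) • (v.submatrix f g).map C + (G.submatrix f g).map C with hMdef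
  have heval : ∀ t : K, (M.det).eval t = 0 := by
    intro t
    have h1 : (Polynomial.evalRingHom t) M.det = ((G + t • v).submatrix f g).det := by
      rw [RingHom.map_det]
      congr 1
      ext k l
      simp only [RingHom.mapMatrix_apply, Matrix.map_apply, hMdef, Matrix.add_apply,
        Matrix.smul_apply, Matrix.submatrix_apply, smul_eq_mul, coe_evalRingHom,
        eval_add, eval_mul, eval_X, eval_C]
      ring
    have h2 : (M.det).eval t = ((G + t • v).submatrix f g).det := by
      rw [← Polynomial.coe_evalRingHom]; exact h1
    rw [h2]
    exact aux_minor_det_zero _ (hrank _ (V.smul_mem t hv)) f g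
  have hp0 : M.det = 0 := by
    apply Polynomial.eq_zero_of_forall_eval_zero_of_natDegree_lt_card _ heval
    have h1 : M.det.natDegree ≤ r + 1 := by
      simpa using Polynomial.natDegree_det_X_add_C_le (v.submatrix f g) (G.submatrix f g)
    have h2 : ((r + 1 : ℕ) : Cardinal) < (r + 2 : Cardinal) := by
      have h3 : ((r + 1 : ℕ) : Cardinal) < ((r + 2 : ℕ) : Cardinal) := by
        exact_mod_cast (by omega : r + 1 < r + 2)
      convert h3 using 1
      push_cast
      ring
    calc (M.det.natDegree : Cardinal) ≤ ((r + 1 : ℕ) : Cardinal) := by exact_mod_cast h1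
      _ < (r + 2 : Cardinal) := h2
      _ ≤ Cardinal.mk K := hK
  set w : Fin (r + 1) → K[X] := fun k => C (v (f k) j) with hwdef
  have hMcol : M = M.updateCol (Fin.last r) ((X : K[X]) • w) := by
    refine Matrix.ext fun k l => ?_
    rw [Matrix.updateCol_apply]
    split_ifs with hl
    · subst hl
      have hz : G (f k) j = 0 := hG0 _ _ (Or.inr hj)
      simp only [hMdef, Matrix.add_apply, Matrix.smul_apply, Matrix.map_apply,
        Matrix.submatrix_apply, Pi.smul_apply, hwdef, smul_eq_mul, hz, map_zero, add_zero, hgl]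
    · rfl
  have hq : M.det = X * (M.updateCol (Fin.last r) w).det := by
    conv_lhs => rw [hMcol]
    exact Matrix.det_updateCol_smul _ _ _ _
  set N : Matrix (Fin (r + 1)) (Fin (r + 1)) K :=
    (G.submatrix f g).updateCol (Fin.last r) (fun k => v (f k) j) with hNdef
  have hqN : ((M.updateCol (Fin.last r) w).det).eval 0 = N.det := by
    have h1 : (Polynomial.evalRingHom 0) (M.updateCol (Fin.last r) w).det = N.det := by
      rw [RingHom.map_det]
      congr 1
      ext k l
      rw [RingHom.mapMatrix_apply, Matrix.map_apply, Matrix.updateCol_apply, hNdef,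
        Matrix.updateCol_apply]
      split_ifs with hl
      · simp [hwdef]
      · simp [hMdef]
    rw [← Polynomial.coe_evalRingHom]; exact h1
  have hc1 : M.det.coeff 1 = N.det := by
    rw [hq, Polynomial.coeff_X_mul, Polynomial.coeff_zero_eq_eval_zero, hqN]
  set γ : Matrix (Fin r) (Fin r) K :=
    G.submatrix (fun a : Fin r => (⟨a, by omega⟩ : Fin n)) (fun a : Fin r => ⟨a, by omega⟩)
    with hγdef
  have hNγ : N.det = v i j * γ.det := by
    rw [Matrix.det_succ_row N (Fin.last r)]
    have h0 : ∀ l ∈ Finset.univ, l ≠ Fin.last r →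
        ((-1 : K) ^ ((Fin.last r : ℕ) + (l : ℕ)) * N (Fin.last r) l *
          (N.submatrix (Fin.last r).succAbove l.succAbove).det) = 0 := by
      intro l _ hl
      have hz : N (Fin.last r) l = 0 := by
        rw [hNdef, Matrix.updateCol_apply, if_neg hl, Matrix.submatrix_apply, hfl]
        exact hG0 _ _ (Or.inl hi)
      rw [hz, mul_zero, zero_mul]
    rw [Finset.sum_eq_single _ h0 (fun h => absurd (Finset.mem_univ _) h)]
    have hminor : N.submatrix (Fin.last r).succAbove (Fin.last r).succAbove = γ := by
      ext a b
      rw [Matrix.submatrix_apply, Fin.succAbove_last, hNdef, Matrix.updateCol_apply,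
        if_neg (by simp [Fin.ext_iff, Fin.val_last]; omega), Matrix.submatrix_apply, hγdef,
        Matrix.submatrix_apply]
      congr 1
      · simp only [hf]
        rw [dif_pos (show ((a.castSucc : Fin (r + 1)) : ℕ) < r by simpa using a.isLt)]
        exact Fin.ext (by simp)
      · simp only [hg]
        rw [dif_pos (show ((b.castSucc : Fin (r + 1)) : ℕ) < r by simpa using b.isLt)]
        exact Fin.ext (by simp)
    have hcorner : N (Fin.last r) (Fin.last r) = v i j := by
      rw [hNdef, Matrix.updateCol_apply, if_pos rfl, hfl]
    rw [hminor, hcorner, Fin.val_last]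
    have hpow : (-1 : K) ^ (r + r) = 1 := Even.neg_one_pow ⟨r, rfl⟩
    rw [hpow, one_mul]
  have hγne : γ.det ≠ 0 := by
    apply aux_gamma_det_ne_zero hr d hd
    intro a b
    exact hG _ _
  have hfin : v i j * γ.det = 0 := by
    rw [← hNγ, ← hc1, hp0, Polynomial.coeff_zero]
  rcases mul_eq_zero.1 hfin with h | h
  · exact h
  · exact absurd h hγne
end
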